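/- arXiv:1202.3312 — 2 statements merged into one kernel-verified Lean document; each statement's English description precedes it below -/
import Mathlib

section
/- Let H be a Hopf algebra over a field k and A a left H-comodule algebra. If H coacts on A cocommutatively, i.e. for all a ∈ A and b̃ ∈ A^⊗n one has b̃₍₋₁₎ a₍₋₁₎⁽¹⁾ ⊗ a₍₋₁₎⁽²⁾ ⊗ a₍₀₎ ⊗ b̃₍₀₎ = a₍₋₁₎⁽²⁾ b̃₍₋₁₎ ⊗ a₍₋₁₎⁽¹⁾ ⊗ a₍₀₎ ⊗ b̃₍₀₎, then any right H-module M, endowed with the trivial left H-coaction m ↦ 1 ⊗ m, is an ^A H-HCC; in particular the cyclic operator τₙ preserves H-colinearity and the operators δᵢ, σᵢ, τₙ make Hom^H(A^⊗(n+1), M) a cocyclic module. -/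
open TensorProduct LinearMap

noncomputable section
namespace HCN

variable (k : Type) [Field k]

section Shortcuts
variable (X Y Z W : Type) [AddCommGroup X] [Module k X] [AddCommGroup Y] [Module k Y]
  [AddCommGroup Z] [Module k Z] [AddCommGroup W] [Module k W]
abbrev cmm : X ⊗[k] Y →ₗ[k] Y ⊗[k] X := (TensorProduct.comm k X Y).toLinearMap
abbrev asc : (X ⊗[k] Y) ⊗[k] Z →ₗ[k] X ⊗[k] (Y ⊗[k] Z) := (TensorProduct.assoc k X Y Z).toLinearMap
abbrev ascs : X ⊗[k] (Y ⊗[k] Z) →ₗ[k] (X ⊗[k] Y) ⊗[k] Z := (TensorProduct.assoc k X Y Z).symm.toLinearMap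
abbrev mid4 : (X ⊗[k] Y) ⊗[k] (Z ⊗[k] W) →ₗ[k] (X ⊗[k] Z) ⊗[k] (Y ⊗[k] W) :=
  (TensorProduct.tensorTensorTensorComm k X Y Z W).toLinearMap
end Shortcuts

section Mul
variable (H : Type) [AddCommGroup H] [Module k H]
def opMul (μ : H ⊗[k] H →ₗ[k] H) : H ⊗[k] H →ₗ[k] H := μ ∘ₗ cmm k H H
def lmulBy (μ : H ⊗[k] H →ₗ[k] H) (h : H) : H →ₗ[k] H := μ ∘ₗ TensorProduct.mk k H H h
def rmulBy (μ : H ⊗[k] H →ₗ[k] H) (h : H) : H →ₗ[k] H := μ ∘ₗ (TensorProduct.mk k H H).flip h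
variable {H}
variable {V W : Type} [AddCommGroup V] [Module k V] [AddCommGroup W] [Module k W]
def diagL (μ : H ⊗[k] H →ₗ[k] H) (ρV : V →ₗ[k] H ⊗[k] V) (ρW : W →ₗ[k] H ⊗[k] W) :
    (V ⊗[k] W) →ₗ[k] H ⊗[k] (V ⊗[k] W) :=
  (μ.rTensor (V ⊗[k] W)) ∘ₗ mid4 k H V H W ∘ₗ (TensorProduct.map ρV ρW)
def diagR (μ : H ⊗[k] H →ₗ[k] H) (ρV : V →ₗ[k] V ⊗[k] H) (ρW : W →ₗ[k] W ⊗[k] H) :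
    (V ⊗[k] W) →ₗ[k] (V ⊗[k] W) ⊗[k] H :=
  (μ.lTensor (V ⊗[k] W)) ∘ₗ mid4 k V H W H ∘ₗ (TensorProduct.map ρV ρW)
end Mul

section TpowSec
variable (A : Type) [AddCommGroup A] [Module k A]
def Tpow : ℕ → ModuleCat k
  | 0 => ModuleCat.of k k
  | n+1 => ModuleCat.of k (A ⊗[k] (Tpow n : Type))

/-- the linear equivalence extracting the *last* tensor factor of `Tpow k A (n+1)`. -/
def epow : ∀ n : ℕ, (Tpow k A (n+1) : Type) ≃ₗ[k] (Tpow k A n : Type) ⊗[k] A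
  | 0 => TensorProduct.comm k A k
  | n+1 => (LinearEquiv.lTensor A (epow n)).trans
      (TensorProduct.assoc k A (Tpow k A n : Type) A).symm
end TpowSec

section TrivCoact
variable (H : Type) [Ring H] [Algebra k H]
variable (M : Type) [AddCommGroup M] [Module k M]
/-- the trivial left coaction `m ↦ 1 ⊗ m`. -/
def trivL : M →ₗ[k] H ⊗[k] M := TensorProduct.mk k H M 1
/-- the trivial right coaction `m ↦ m ⊗ 1`. -/
def trivR : M →ₗ[k] M ⊗[k] H := (TensorProduct.mk k M H).flip 1
/-- the trivial right action `m ⊗ h ↦ ε(h) m` associated to a counit map `ε`. -/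
def trivAct (ε : H →ₗ[k] k) : M ⊗[k] H →ₗ[k] M :=
  (TensorProduct.rid k M).toLinearMap ∘ₗ (ε.lTensor M)
end TrivCoact

section TpowCoact
variable {H : Type} [Ring H] [Algebra k H]
variable {A : Type} [AddCommGroup A] [Module k A]

/-- the diagonal left coaction on `Tpow k A n` induced by a left coaction on `A`
(with respect to a multiplication map `μ` on `H`). -/
def TpowρL (μ : H ⊗[k] H →ₗ[k] H) (ρA : A →ₗ[k] H ⊗[k] A) :
    ∀ n : ℕ, (Tpow k A n : Type) →ₗ[k] H ⊗[k] (Tpow k A n : Type)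
  | 0 => trivL k H k
  | n+1 => diagL k μ ρA (TpowρL μ ρA n)

/-- the diagonal right coaction on `Tpow k A n` induced by a right coaction on `A`. -/
def TpowρR (μ : H ⊗[k] H →ₗ[k] H) (ρA : A →ₗ[k] A ⊗[k] H) :
    ∀ n : ℕ, (Tpow k A n : Type) →ₗ[k] (Tpow k A n : Type) ⊗[k] H
  | 0 => trivR k H k
  | n+1 => diagR k μ ρA (TpowρR μ ρA n)

end TpowCoact

section TwistSec
variable {H M : Type} [AddCommGroup H] [Module k H] [AddCommGroup M] [Module k M]

/-- the anti-Yetter--Drinfeld twist map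
`h ⊗ (g ⊗ m) ↦ S(h⁽³⁾) g h⁽¹⁾ ⊗ m · h⁽²⁾`, expressed diagrammatically in terms of a
multiplication `μ`, a comultiplication `Δ` and an antipode `S` of `H` and a right action
`act` of `H` on `M`. -/
def Twist (μ : H ⊗[k] H →ₗ[k] H) (Δ : H →ₗ[k] H ⊗[k] H) (S : H →ₗ[k] H)
    (act : M ⊗[k] H →ₗ[k] M) : H ⊗[k] (H ⊗[k] M) →ₗ[k] H ⊗[k] M :=
  letI Δ₂ : H →ₗ[k] H ⊗[k] (H ⊗[k] H) := (Δ.lTensor H) ∘ₗ Δ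
  letI actc : H ⊗[k] M →ₗ[k] M := act ∘ₗ cmm k H M
  letI sm : H ⊗[k] H →ₗ[k] H := opMul k H μ
  letI u : (H ⊗[k] H) ⊗[k] M →ₗ[k] H ⊗[k] M :=
    (S.rTensor M) ∘ₗ (actc.lTensor H) ∘ₗ asc k H H M ∘ₗ ((cmm k H H).rTensor M)
  (sm.rTensor M) ∘ₗ ascs k H H M ∘ₗ (u.lTensor H) ∘ₗ
    (sm.rTensor ((H ⊗[k] H) ⊗[k] M)) ∘ₗ mid4 k H (H ⊗[k] H) H M ∘ₗ (Δ₂.rTensor (H ⊗[k] M))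

/-- the right-coaction version of the anti-Yetter--Drinfeld twist map:
`(m ⊗ g) ⊗ h ↦ m · h⁽²⁾ ⊗ S(h⁽³⁾) g h⁽¹⁾`. -/
def TwistR (μ : H ⊗[k] H →ₗ[k] H) (Δ : H →ₗ[k] H ⊗[k] H) (S : H →ₗ[k] H)
    (act : M ⊗[k] H →ₗ[k] M) : (M ⊗[k] H) ⊗[k] H →ₗ[k] M ⊗[k] H :=
  cmm k H M ∘ₗ Twist k μ Δ S act ∘ₗ ((cmm k M H).lTensor H) ∘ₗ cmm k (M ⊗[k] H) H

end TwistSec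

section ComodLaws
variable {H : Type} [Ring H] [Bialgebra k H]
variable {V : Type} [AddCommGroup V] [Module k V]

/-- coassociativity of a left `H`-coaction. -/
def IsCoassocL (ρ : V →ₗ[k] H ⊗[k] V) : Prop :=
  ρ.lTensor H ∘ₗ ρ = asc k H H V ∘ₗ ((Coalgebra.comul (R := k) (A := H)).rTensor V) ∘ₗ ρ

/-- counitality of a left `H`-coaction. -/
def IsCounitalL (ρ : V →ₗ[k] H ⊗[k] V) : Prop :=
  (TensorProduct.lid k V).toLinearMap ∘ₗ ((Coalgebra.counit (R := k) (A := H)).rTensor V) ∘ₗ ρ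
    = LinearMap.id

/-- coassociativity of a right `H`-coaction. -/
def IsCoassocR (ρ : V →ₗ[k] V ⊗[k] H) : Prop :=
  ρ.rTensor H ∘ₗ ρ = ascs k V H H ∘ₗ ((Coalgebra.comul (R := k) (A := H)).lTensor V) ∘ₗ ρ

/-- counitality of a right `H`-coaction. -/
def IsCounitalR (ρ : V →ₗ[k] V ⊗[k] H) : Prop :=
  (TensorProduct.rid k V).toLinearMap ∘ₗ ((Coalgebra.counit (R := k) (A := H)).lTensor V) ∘ₗ ρ
    = LinearMap.id

end ComodLaws

section ComodAlg
variable {H : Type} [Ring H] [Bialgebra k H]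

/-- `A` is a left `H`-comodule algebra via the coaction `ρ`:  `ρ` is a counital coassociative
coaction which is moreover a morphism of unital algebras. -/
def IsComodAlgL {A : Type} [Ring A] [Algebra k A] (ρ : A →ₗ[k] H ⊗[k] A) : Prop :=
  IsCoassocL k ρ ∧ IsCounitalL k ρ ∧ ρ 1 = 1 ∧ ∀ a b : A, ρ (a * b) = ρ a * ρ b

/-- `A` is a right `H`-comodule algebra via the coaction `ρ`. -/
def IsComodAlgR {A : Type} [Ring A] [Algebra k A] (ρ : A →ₗ[k] A ⊗[k] H) : Prop :=
  IsCoassocR k ρ ∧ IsCounitalR k ρ ∧ ρ 1 = 1 ∧ ∀ a b : A, ρ (a * b) = ρ a * ρ b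

/-- `C` is a right `H`-comodule coalgebra via the coaction `ρ`:  `ρ` is a counital
coassociative coaction which is moreover a morphism of coalgebras, i.e.
`c₍₀₎⁽¹⁾ ⊗ c₍₀₎⁽²⁾ ⊗ c₍₁₎ = c⁽¹⁾₍₀₎ ⊗ c⁽²⁾₍₀₎ ⊗ c⁽¹⁾₍₁₎c⁽²⁾₍₁₎` and `ε(c₍₀₎)c₍₁₎ = ε(c)1`. -/
def IsComodCoalgR {C : Type} [AddCommGroup C] [Module k C] [Coalgebra k C]
    (ρ : C →ₗ[k] C ⊗[k] H) : Prop :=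
  IsCoassocR k ρ ∧ IsCounitalR k ρ
  ∧ ((Coalgebra.comul (R := k) (A := C)).rTensor H) ∘ₗ ρ
      = ((LinearMap.mul' k H).lTensor (C ⊗[k] C)) ∘ₗ mid4 k C H C H
          ∘ₗ (TensorProduct.map ρ ρ) ∘ₗ (Coalgebra.comul (R := k) (A := C))
  ∧ (TensorProduct.lid k H).toLinearMap ∘ₗ ((Coalgebra.counit (R := k) (A := C)).rTensor H) ∘ₗ ρ
      = (Algebra.linearMap k H) ∘ₗ (Coalgebra.counit (R := k) (A := C))

end ComodAlg

section Actions
variable {H : Type} [Ring H] [Algebra k H]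
variable {M : Type} [AddCommGroup M] [Module k M]

/-- `act` is a unital associative right action of the algebra `H` on `M`. -/
def IsRAct (act : M ⊗[k] H →ₗ[k] M) : Prop :=
  (∀ m : M, act (m ⊗ₜ[k] 1) = m) ∧
    ∀ (m : M) (g h : H), act (act (m ⊗ₜ[k] g) ⊗ₜ[k] h) = act (m ⊗ₜ[k] (g * h))

/-- `act` is a unital associative right action of `(H, μ, e)` on `M` where the
multiplication `μ` and unit `e` are given explicitly. -/
def IsRActμ (μ : H ⊗[k] H →ₗ[k] H) (e : H) (act : M ⊗[k] H →ₗ[k] M) : Prop :=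
  (∀ m : M, act (m ⊗ₜ[k] e) = m) ∧
    ∀ (m : M) (g h : H), act (act (m ⊗ₜ[k] g) ⊗ₜ[k] h) = act (m ⊗ₜ[k] μ (g ⊗ₜ[k] h))

end Actions

section ModAlg
variable {H : Type} [Ring H] [Bialgebra k H]

/-- `β` is a left action of the bialgebra `H` on `A` making `A` a left `H`-module algebra. -/
def IsModuleAlgL {A : Type} [Ring A] [Algebra k A]
    (β : H ⊗[k] A →ₗ[k] A) : Prop :=
  (∀ a : A, β (1 ⊗ₜ[k] a) = a)
  ∧ (∀ (g h : H) (a : A), β (g ⊗ₜ[k] β (h ⊗ₜ[k] a)) = β ((g * h) ⊗ₜ[k] a))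
  ∧ (β ∘ₗ ((LinearMap.mul' k A).lTensor H)
      = (LinearMap.mul' k A) ∘ₗ (TensorProduct.map β β) ∘ₗ mid4 k H H A A
          ∘ₗ ((Coalgebra.comul (R := k) (A := H)).rTensor (A ⊗[k] A)))
  ∧ (∀ h : H, β (h ⊗ₜ[k] (1 : A)) = (Coalgebra.counit (R := k) (A := H) h) • (1 : A))

end ModAlg

section LeftSAYD
variable {H : Type} [Ring H] [HopfAlgebra k H]
variable {A M : Type} [AddCommGroup A] [Module k A] [AddCommGroup M] [Module k M]

/-- colinearity of `φ : V → M` with respect to left `H`-coactions. -/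
def IsColinL {V : Type} [AddCommGroup V] [Module k V]
    (ρV : V →ₗ[k] H ⊗[k] V) (ρM : M →ₗ[k] H ⊗[k] M) (φ : V →ₗ[k] M) : Prop :=
  ρM ∘ₗ φ = φ.lTensor H ∘ₗ ρV

/-- the `^A H`-anti-Yetter--Drinfeld condition for a colinear map `φ : A ⊗ W → M`:
`(φ(a₍₀₎ ⊗ w) · a₍₋₁₎)₍₋₁₎ ⊗ (φ(a₍₀₎ ⊗ w) · a₍₋₁₎)₍₀₎
  = S(a₍₋₁₎⁽³⁾) φ(a₍₀₎ ⊗ w)₍₋₁₎ a₍₋₁₎⁽¹⁾ ⊗ φ(a₍₀₎ ⊗ w)₍₀₎ · a₍₋₁₎⁽²⁾`. -/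
def AYDcondL {W : Type} [AddCommGroup W] [Module k W]
    (ρA : A →ₗ[k] H ⊗[k] A) (ρM : M →ₗ[k] H ⊗[k] M) (act : M ⊗[k] H →ₗ[k] M)
    (φ : (A ⊗[k] W) →ₗ[k] M) : Prop :=
  ρM ∘ₗ act ∘ₗ cmm k H M ∘ₗ (φ.lTensor H) ∘ₗ asc k H A W ∘ₗ (ρA.rTensor W)
  = Twist k (LinearMap.mul' k H) (Coalgebra.comul (R := k)) (HopfAlgebra.antipode (R := k)) act
      ∘ₗ ((ρM ∘ₗ φ).lTensor H) ∘ₗ asc k H A W ∘ₗ (ρA.rTensor W)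

/-- the stability condition for a map `φ : V → M`:  `φ(v₍₀₎) · v₍₋₁₎ = φ(v)`. -/
def StabCondL {V : Type} [AddCommGroup V] [Module k V]
    (ρV : V →ₗ[k] H ⊗[k] V) (act : M ⊗[k] H →ₗ[k] M) (φ : V →ₗ[k] M) : Prop :=
  act ∘ₗ cmm k H M ∘ₗ (φ.lTensor H) ∘ₗ ρV = φ

/-- `M` (a module and comodule over `H`) is an `^A H`-SAYD module for the left `H`-comodule
(algebra) `A`:  every `H`-colinear map `φ : A^{⊗(n+1)} → M` (with respect to the diagonal
coaction) satisfies the `^A H`-AYD and stability conditions. -/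
def IsAHSAYDL (ρA : A →ₗ[k] H ⊗[k] A) (ρM : M →ₗ[k] H ⊗[k] M)
    (act : M ⊗[k] H →ₗ[k] M) : Prop :=
  ∀ n : ℕ, ∀ φ : (A ⊗[k] (Tpow k A n : Type)) →ₗ[k] M,
    IsColinL k (TpowρL k (LinearMap.mul' k H) ρA (n + 1)) ρM φ →
      AYDcondL k ρA ρM act φ ∧ StabCondL k (TpowρL k (LinearMap.mul' k H) ρA (n + 1)) act φ

/-- the left-coaction rotation map on `Tpow k A (n+1)`:
`a₀ ⊗ ⋯ ⊗ aₙ ↦ aₙ₍₋₁₎ ⊗ (aₙ₍₀₎ ⊗ a₀ ⊗ ⋯ ⊗ aₙ₋₁)`. -/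
def rotρL (ρA : A →ₗ[k] H ⊗[k] A) (n : ℕ) :
    (Tpow k A (n+1) : Type) →ₗ[k] H ⊗[k] (Tpow k A (n+1) : Type) :=
  asc k H A (Tpow k A n : Type) ∘ₗ cmm k (Tpow k A n : Type) (H ⊗[k] A)
    ∘ₗ (ρA.lTensor (Tpow k A n : Type)) ∘ₗ (epow k A n).toLinearMap

/-- the cyclic operator `τₙ` on `Hom(A^{⊗(n+1)}, M)`:
`(τₙ f)(a₀ ⊗ ⋯ ⊗ aₙ) = f(aₙ₍₀₎ ⊗ a₀ ⊗ ⋯ ⊗ aₙ₋₁) · aₙ₍₋₁₎`. -/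
def tauL (ρA : A →ₗ[k] H ⊗[k] A) (act : M ⊗[k] H →ₗ[k] M) (n : ℕ)
    (φ : (Tpow k A (n+1) : Type) →ₗ[k] M) : (Tpow k A (n+1) : Type) →ₗ[k] M :=
  act ∘ₗ cmm k H M ∘ₗ (φ.lTensor H) ∘ₗ rotρL k ρA n

/-- `M` is an `^A H`-HCC (Hopf cyclic coefficients) for the left `H`-comodule algebra `A`:
the cyclic operator `τₙ` is well defined on the `H`-colinear maps `A^{⊗(n+1)} → M`
(so the whole cocyclic structure is well defined) and satisfies `τₙ^{n+1} = id`, making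
`Hom^H(A^{⊗(n+1)}, M)` a cocyclic module. -/
def IsAHHCCL (ρA : A →ₗ[k] H ⊗[k] A) (ρM : M →ₗ[k] H ⊗[k] M)
    (act : M ⊗[k] H →ₗ[k] M) : Prop :=
  ∀ n : ℕ, ∀ φ : (Tpow k A (n+1) : Type) →ₗ[k] M,
    IsColinL k (TpowρL k (LinearMap.mul' k H) ρA (n + 1)) ρM φ →
      IsColinL k (TpowρL k (LinearMap.mul' k H) ρA (n + 1)) ρM (tauL k ρA act n φ)
      ∧ (tauL k ρA act n)^[n+1] φ = φ

/-- `M` is a (right-left) stable anti-Yetter--Drinfeld module over `H`: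
`(m·h)₍₋₁₎ ⊗ (m·h)₍₀₎ = S(h⁽³⁾) m₍₋₁₎ h⁽¹⁾ ⊗ m₍₀₎ · h⁽²⁾` and `m₍₀₎ · m₍₋₁₎ = m`. -/
def IsSAYD (ρM : M →ₗ[k] H ⊗[k] M) (act : M ⊗[k] H →ₗ[k] M) : Prop :=
  (ρM ∘ₗ act
    = Twist k (LinearMap.mul' k H) (Coalgebra.comul (R := k)) (HopfAlgebra.antipode (R := k)) act
        ∘ₗ (ρM.lTensor H) ∘ₗ cmm k M H)
  ∧ act ∘ₗ cmm k H M ∘ₗ ρM = LinearMap.id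

end LeftSAYD
section Characters
variable {H : Type} [Ring H] [HopfAlgebra k H]

/-- `σ` is a group-like element of `H`. -/
def IsGrouplike (σ : H) : Prop :=
  Coalgebra.comul (R := k) σ = σ ⊗ₜ[k] σ ∧ Coalgebra.counit (R := k) σ = 1

/-- the `δ`-twisted antipode `S_δ(h) = δ(h⁽¹⁾) S(h⁽²⁾)` of a character `δ : H → k`. -/
def Sdelta (δ : H →ₐ[k] k) : H →ₗ[k] H :=
  (TensorProduct.lid k H).toLinearMap
    ∘ₗ (TensorProduct.map δ.toLinearMap (HopfAlgebra.antipode (R := k)))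
    ∘ₗ (Coalgebra.comul (R := k))

/-- the right action of `H` on `k` through a character `δ` : `x · h = δ(h) x`. -/
def actChar (δ : H →ₐ[k] k) : k ⊗[k] H →ₗ[k] k :=
  (TensorProduct.lid k k).toLinearMap ∘ₗ (δ.toLinearMap.lTensor k)

/-- the left coaction of `H` on `k` given by a (group-like) element `σ` : `x ↦ σ ⊗ x`. -/
def coactGrouplike (σ : H) : k →ₗ[k] H ⊗[k] k := TensorProduct.mk k H k σ

end Characters

section RightSAYD
/- The right-coaction versions, with the Hopf structure maps `μ`, `Δ`, `S` given explicitly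
(so that they can be applied to the bicrossed product Hopf algebra structure on `F ⊗ U`). -/
variable {H : Type} [Ring H] [Algebra k H]
variable {A M : Type} [AddCommGroup A] [Module k A] [AddCommGroup M] [Module k M]

/-- colinearity of `φ : V → M` with respect to right `H`-coactions. -/
def IsColinR {V : Type} [AddCommGroup V] [Module k V]
    (ρV : V →ₗ[k] V ⊗[k] H) (ρM : M →ₗ[k] M ⊗[k] H) (φ : V →ₗ[k] M) : Prop :=
  ρM ∘ₗ φ = φ.rTensor H ∘ₗ ρV

/-- the canonical map `A ⊗ W → (A ⊗ W) ⊗ H`, `a ⊗ w ↦ (a₍₀₎ ⊗ w) ⊗ a₍₁₎`,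
coacting on the first tensor factor only. -/
def coactFirstR {W : Type} [AddCommGroup W] [Module k W] (ρA : A →ₗ[k] A ⊗[k] H) :
    (A ⊗[k] W) →ₗ[k] (A ⊗[k] W) ⊗[k] H :=
  ascs k A W H ∘ₗ ((cmm k H W).lTensor A) ∘ₗ asc k A H W ∘ₗ (ρA.rTensor W)

/-- the right-coaction version of the `^A H`-anti-Yetter--Drinfeld condition for a
colinear map `φ : A ⊗ W → M`. -/
def AYDcondR {W : Type} [AddCommGroup W] [Module k W]
    (μ : H ⊗[k] H →ₗ[k] H) (Δ : H →ₗ[k] H ⊗[k] H) (S : H →ₗ[k] H)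
    (ρA : A →ₗ[k] A ⊗[k] H) (ρM : M →ₗ[k] M ⊗[k] H) (act : M ⊗[k] H →ₗ[k] M)
    (φ : (A ⊗[k] W) →ₗ[k] M) : Prop :=
  ρM ∘ₗ act ∘ₗ (φ.rTensor H) ∘ₗ coactFirstR k ρA
  = TwistR k μ Δ S act ∘ₗ ((ρM ∘ₗ φ).rTensor H) ∘ₗ coactFirstR k ρA

/-- the right-coaction stability condition : `φ(v₍₀₎) · v₍₁₎ = φ(v)`. -/
def StabCondR {V : Type} [AddCommGroup V] [Module k V]
    (ρV : V →ₗ[k] V ⊗[k] H) (act : M ⊗[k] H →ₗ[k] M) (φ : V →ₗ[k] M) : Prop :=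
  act ∘ₗ (φ.rTensor H) ∘ₗ ρV = φ

/-- `M` is an `^A H`-SAYD module for a *right* `H`-comodule (algebra) `A`, where the Hopf
structure maps `μ`, `Δ`, `S` of `H` are given explicitly. -/
def IsAHSAYDR (μ : H ⊗[k] H →ₗ[k] H) (Δ : H →ₗ[k] H ⊗[k] H) (S : H →ₗ[k] H)
    (ρA : A →ₗ[k] A ⊗[k] H) (ρM : M →ₗ[k] M ⊗[k] H) (act : M ⊗[k] H →ₗ[k] M) : Prop :=
  ∀ n : ℕ, ∀ φ : (A ⊗[k] (Tpow k A n : Type)) →ₗ[k] M,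
    IsColinR k (TpowρR k μ ρA (n + 1)) ρM φ →
      AYDcondR k μ Δ S ρA ρM act φ ∧ StabCondR k (TpowρR k μ ρA (n + 1)) act φ

end RightSAYD
section CotensorSide
variable {H : Type} [Ring H] [HopfAlgebra k H]
variable {C M : Type} [AddCommGroup C] [Module k C] [AddCommGroup M] [Module k M]

/-- the cotensor defect map `V ⊗ M → V ⊗ (H ⊗ M)`, whose kernel is the cotensor product
`V □_H M` of a right `H`-comodule `V` and a left `H`-comodule `M`. -/
def cotensorDefect {V : Type} [AddCommGroup V] [Module k V]
    (ρV : V →ₗ[k] V ⊗[k] H) (ρM : M →ₗ[k] H ⊗[k] M) :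
    V ⊗[k] M →ₗ[k] V ⊗[k] (H ⊗[k] M) :=
  asc k V H M ∘ₗ (ρV.rTensor M) - (ρM.lTensor V)

/-- the map `v ⊗ m ↦ v₍₀₎ ⊗ m · v₍₁₎`. -/
def stabMapC {V : Type} [AddCommGroup V] [Module k V]
    (ρV : V →ₗ[k] V ⊗[k] H) (act : M ⊗[k] H →ₗ[k] M) : V ⊗[k] M →ₗ[k] V ⊗[k] M :=
  ((act ∘ₗ cmm k H M).lTensor V) ∘ₗ asc k V H M ∘ₗ (ρV.rTensor M)

/-- the `H^C`-anti-Yetter--Drinfeld condition: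
`c₍₀₎ ⊗ (m·c₍₁₎)₍₋₁₎ ⊗ (m·c₍₁₎)₍₀₎ = c₍₀₎ ⊗ S(c₍₁₎⁽³⁾) m₍₋₁₎ c₍₁₎⁽¹⁾ ⊗ m₍₀₎ · c₍₁₎⁽²⁾`. -/
def AYDcondC (ρC : C →ₗ[k] C ⊗[k] H) (ρM : M →ₗ[k] H ⊗[k] M)
    (act : M ⊗[k] H →ₗ[k] M) : Prop :=
  ((ρM ∘ₗ act ∘ₗ cmm k H M).lTensor C) ∘ₗ asc k C H M ∘ₗ (ρC.rTensor M)
  = ((Twist k (LinearMap.mul' k H) (Coalgebra.comul (R := k))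
        (HopfAlgebra.antipode (R := k)) act ∘ₗ (ρM.lTensor H)).lTensor C)
      ∘ₗ asc k C H M ∘ₗ (ρC.rTensor M)

/-- `M` is an `H^C`-SAYD module for the right `H`-comodule (coalgebra) `C` :
the `H^C`-AYD condition holds, and the stability condition
`d̃₍₀₎ ⊗ m · d̃₍₁₎ = d̃ ⊗ m` holds on the cotensor product `C^{⊗(n+1)} □_H M`. -/
def IsHCSAYD (ρC : C →ₗ[k] C ⊗[k] H) (ρM : M →ₗ[k] H ⊗[k] M)
    (act : M ⊗[k] H →ₗ[k] M) : Prop :=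
  AYDcondC k ρC ρM act
  ∧ ∀ n : ℕ, ∀ x ∈ LinearMap.ker
      (cotensorDefect k (TpowρR k (LinearMap.mul' k H) ρC (n + 1)) ρM),
      stabMapC k (TpowρR k (LinearMap.mul' k H) ρC (n + 1)) act x = x

/-- the cyclic operator `τₙ` on `C^{⊗(n+1)} ⊗ M`:
`c₀ ⊗ ⋯ ⊗ cₙ ⊗ m ↦ c₁ ⊗ ⋯ ⊗ cₙ ⊗ c₀₍₀₎ ⊗ m · c₀₍₁₎`. -/
def tauC (ρC : C →ₗ[k] C ⊗[k] H) (act : M ⊗[k] H →ₗ[k] M) (n : ℕ) :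
    ((Tpow k C (n+1) : Type) ⊗[k] M) →ₗ[k] ((Tpow k C (n+1) : Type) ⊗[k] M) :=
  letI W : Type := (Tpow k C n : Type)
  (((epow k C n).symm.toLinearMap).rTensor M)
    ∘ₗ ((act ∘ₗ cmm k H M).lTensor (W ⊗[k] C))
    ∘ₗ asc k (W ⊗[k] C) H M
    ∘ₗ ((ascs k W C H).rTensor M)
    ∘ₗ ((cmm k (C ⊗[k] H) W).rTensor M)
    ∘ₗ ((ρC.rTensor W).rTensor M)

/-- `M` is an `H^C`-HCC (Hopf cyclic coefficients) for the right `H`-comodule coalgebra `C` :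
the cyclic operator `τₙ` is well defined on the cotensor product `C^{⊗(n+1)} □_H M`
(so the whole cocyclic structure is well defined) and satisfies `τₙ^{n+1} = id` on it,
making `C^{⊗(n+1)} □_H M` a cocyclic module. -/
def IsHCHCC (ρC : C →ₗ[k] C ⊗[k] H) (ρM : M →ₗ[k] H ⊗[k] M)
    (act : M ⊗[k] H →ₗ[k] M) : Prop :=
  ∀ n : ℕ, ∀ x ∈ LinearMap.ker
      (cotensorDefect k (TpowρR k (LinearMap.mul' k H) ρC (n + 1)) ρM),
    tauC k ρC act n x ∈ LinearMap.ker
      (cotensorDefect k (TpowρR k (LinearMap.mul' k H) ρC (n + 1)) ρM)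
    ∧ (tauC k ρC act n)^[n+1] x = x

end CotensorSide

section CommCocommCond
variable {H : Type} [AddCommGroup H] [Module k H]
variable {A C W : Type} [AddCommGroup A] [Module k A] [AddCommGroup C] [Module k C]
  [AddCommGroup W] [Module k W]

/-- auxiliary map `(x ⊗ y) ⊗ z ↦ (z * x) ⊗ y`. -/
def muL (μ : H ⊗[k] H →ₗ[k] H) : (H ⊗[k] H) ⊗[k] H →ₗ[k] H ⊗[k] H :=
  (μ.rTensor H) ∘ₗ ascs k H H H ∘ₗ cmm k (H ⊗[k] H) H

/-- auxiliary map `(x ⊗ y) ⊗ z ↦ (y * z) ⊗ x`. -/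
def muR (μ : H ⊗[k] H →ₗ[k] H) : (H ⊗[k] H) ⊗[k] H →ₗ[k] H ⊗[k] H :=
  cmm k H H ∘ₗ (μ.lTensor H) ∘ₗ asc k H H H

/-- auxiliary map `z ⊗ (x ⊗ y) ↦ (z * x) ⊗ y`. -/
def nuL (μ : H ⊗[k] H →ₗ[k] H) : H ⊗[k] (H ⊗[k] H) →ₗ[k] H ⊗[k] H :=
  (μ.rTensor H) ∘ₗ ascs k H H H

/-- auxiliary map `z ⊗ (x ⊗ y) ↦ (y * z) ⊗ x`. -/
def nuR (μ : H ⊗[k] H →ₗ[k] H) : H ⊗[k] (H ⊗[k] H) →ₗ[k] H ⊗[k] H :=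
  cmm k H H ∘ₗ (μ.lTensor H) ∘ₗ asc k H H H ∘ₗ cmm k H (H ⊗[k] H)

/-- `H` coacts *cocommutatively* on the pair `(A, W)` (`A` and `W` left `H`-comodules):
`w₍₋₁₎ a₍₋₁₎⁽¹⁾ ⊗ a₍₋₁₎⁽²⁾ ⊗ a₍₀₎ ⊗ w₍₀₎ = a₍₋₁₎⁽²⁾ w₍₋₁₎ ⊗ a₍₋₁₎⁽¹⁾ ⊗ a₍₀₎ ⊗ w₍₀₎`. -/
def CocommCondL (μ : H ⊗[k] H →ₗ[k] H) (Δ : H →ₗ[k] H ⊗[k] H)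
    (ρA : A →ₗ[k] H ⊗[k] A) (ρW : W →ₗ[k] H ⊗[k] W) : Prop :=
  letI base : A ⊗[k] W →ₗ[k] ((H ⊗[k] H) ⊗[k] H) ⊗[k] (A ⊗[k] W) :=
    mid4 k (H ⊗[k] H) A H W ∘ₗ (TensorProduct.map ((Δ.rTensor A) ∘ₗ ρA) ρW)
  ((muL k μ).rTensor (A ⊗[k] W)) ∘ₗ base = ((muR k μ).rTensor (A ⊗[k] W)) ∘ₗ base

/-- `H` coacts *cocommutatively* on the pair `(W, C)` (`W` and `C` right `H`-comodules):
`w₍₀₎ ⊗ c₍₀₎ ⊗ w₍₁₎ c₍₁₎⁽¹⁾ ⊗ c₍₁₎⁽²⁾ = w₍₀₎ ⊗ c₍₀₎ ⊗ c₍₁₎⁽²⁾ w₍₁₎ ⊗ c₍₁₎⁽¹⁾`. -/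
def CocommCondR (μ : H ⊗[k] H →ₗ[k] H) (Δ : H →ₗ[k] H ⊗[k] H)
    (ρW : W →ₗ[k] W ⊗[k] H) (ρC : C →ₗ[k] C ⊗[k] H) : Prop :=
  letI base : W ⊗[k] C →ₗ[k] (W ⊗[k] C) ⊗[k] (H ⊗[k] (H ⊗[k] H)) :=
    mid4 k W H C (H ⊗[k] H) ∘ₗ (TensorProduct.map ρW ((Δ.lTensor C) ∘ₗ ρC))
  ((nuL k μ).lTensor (W ⊗[k] C)) ∘ₗ base = ((nuR k μ).lTensor (W ⊗[k] C)) ∘ₗ base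

end CommCocommCond
section Bicross
variable (F U : Type) [Ring F] [HopfAlgebra k F] [Ring U] [HopfAlgebra k U]

/-- inclusion `F → F ⊗ U`, `f ↦ f ⊗ 1`. -/
def jF : F →ₗ[k] F ⊗[k] U := (TensorProduct.mk k F U).flip 1
/-- inclusion `U → F ⊗ U`, `u ↦ 1 ⊗ u`. -/
def jU : U →ₗ[k] F ⊗[k] U := TensorProduct.mk k F U 1

/-- the right coaction of `H = F ⋈ U` on `F`: `f ↦ f⁽¹⁾ ⊗ (f⁽²⁾ ⋈ 1)`. -/
def bcoactF : F →ₗ[k] F ⊗[k] (F ⊗[k] U) :=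
  ((jF k F U).lTensor F) ∘ₗ (Coalgebra.comul (R := k) (A := F))

variable {F U}
variable (α : U ⊗[k] F →ₗ[k] F) (ρU : U →ₗ[k] U ⊗[k] F)

/-- the multiplication of the bicrossed product `F ⋈ U`:
`(f ⋈ u)(g ⋈ v) = f (u⁽¹⁾ ▷ g) ⋈ u⁽²⁾ v`, where `▷` is the action `α`. -/
def bmul : (F ⊗[k] U) ⊗[k] (F ⊗[k] U) →ₗ[k] F ⊗[k] U :=
  letI lam : (F ⊗[k] U) ⊗[k] F →ₗ[k] F :=
    (LinearMap.mul' k F) ∘ₗ (α.lTensor F) ∘ₗ asc k F U F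
  (TensorProduct.map lam (LinearMap.mul' k U))
    ∘ₗ mid4 k (F ⊗[k] U) U F U
    ∘ₗ ((ascs k F U U).rTensor (F ⊗[k] U))
    ∘ₗ (((Coalgebra.comul (R := k) (A := U)).lTensor F).rTensor (F ⊗[k] U))

/-- the comultiplication of the bicrossed product `F ⋈ U`:
`Δ(f ⋈ u) = (f⁽¹⁾ ⋈ u⁽¹⁾₍₀₎) ⊗ (f⁽²⁾ u⁽¹⁾₍₁₎ ⋈ u⁽²⁾)`, where `u ↦ u₍₀₎ ⊗ u₍₁₎` is the
coaction `ρU` of `F` on `U`. -/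
def bcomul : (F ⊗[k] U) →ₗ[k] (F ⊗[k] U) ⊗[k] (F ⊗[k] U) :=
  letI w : F ⊗[k] (F ⊗[k] U) →ₗ[k] F ⊗[k] U :=
    ((opMul k F (LinearMap.mul' k F)).rTensor U) ∘ₗ ascs k F F U
  (w.lTensor (F ⊗[k] U))
    ∘ₗ asc k (F ⊗[k] U) F (F ⊗[k] U)
    ∘ₗ ((ascs k F U F).rTensor (F ⊗[k] U))
    ∘ₗ ((ρU.lTensor F).rTensor (F ⊗[k] U))
    ∘ₗ mid4 k F F U U
    ∘ₗ (TensorProduct.map (Coalgebra.comul (R := k) (A := F))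
          (Coalgebra.comul (R := k) (A := U)))

/-- the antipode of the bicrossed product `F ⋈ U`:
`S(f ⋈ u) = (1 ⋈ S_U(u₍₀₎)) · (S_F(f u₍₁₎) ⋈ 1)`. -/
def bS : (F ⊗[k] U) →ₗ[k] F ⊗[k] U :=
  bmul k α ∘ₗ (TensorProduct.map (jU k F U ∘ₗ (HopfAlgebra.antipode (R := k) (A := U)))
      (jF k F U ∘ₗ (HopfAlgebra.antipode (R := k) (A := F))
        ∘ₗ (opMul k F (LinearMap.mul' k F))))
    ∘ₗ asc k U F F
    ∘ₗ cmm k F (U ⊗[k] F)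
    ∘ₗ (ρU.lTensor F)

/-- the right coaction of `H = F ⋈ U` on `U`: `u ↦ u₍₀₎ ⊗ (u₍₁₎ ⋈ 1)`. -/
def bcoactU : U →ₗ[k] U ⊗[k] (F ⊗[k] U) :=
  ((jF k F U).lTensor U) ∘ₗ ρU

/-- `(F, U)` together with the action `α : U ⊗ F → F` and the coaction `ρU : U → U ⊗ F`
is a matched pair of Hopf algebras, so that the bicrossed product `F ⋈ U` (with
multiplication `bmul` and comultiplication `bcomul`) is a Hopf algebra:
`F` is a left `U`-module algebra, `U` is a right `F`-comodule coalgebra, and the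
Majid compatibility conditions hold. -/
def IsMatchedPair : Prop :=
  -- `α` is a left `U`-module structure on `F`
  (∀ f : F, α ((1 : U) ⊗ₜ[k] f) = f)
  ∧ (α ∘ₗ ((LinearMap.mul' k U).rTensor F) = α ∘ₗ (α.lTensor U) ∘ₗ asc k U U F)
  -- making `F` a `U`-module algebra
  ∧ (α ∘ₗ ((LinearMap.mul' k F).lTensor U)
      = (LinearMap.mul' k F) ∘ₗ (TensorProduct.map α α) ∘ₗ mid4 k U U F F
          ∘ₗ ((Coalgebra.comul (R := k) (A := U)).rTensor (F ⊗[k] F)))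
  ∧ (∀ u : U, α (u ⊗ₜ[k] (1 : F)) = (Coalgebra.counit (R := k) (A := U) u) • (1 : F))
  -- `ρU` is a right `F`-comodule structure on `U`
  ∧ IsCoassocR k ρU ∧ IsCounitalR k ρU
  -- making `U` an `F`-comodule coalgebra
  ∧ (((Coalgebra.comul (R := k) (A := U)).rTensor F) ∘ₗ ρU
      = ((LinearMap.mul' k F).lTensor (U ⊗[k] U)) ∘ₗ mid4 k U F U F
          ∘ₗ (TensorProduct.map ρU ρU) ∘ₗ (Coalgebra.comul (R := k) (A := U)))
  ∧ ((TensorProduct.lid k F).toLinearMap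
        ∘ₗ ((Coalgebra.counit (R := k) (A := U)).rTensor F) ∘ₗ ρU
      = (Algebra.linearMap k F) ∘ₗ (Coalgebra.counit (R := k) (A := U)))
  -- `ρU(1) = 1 ⊗ 1`
  ∧ (ρU 1 = (1 : U) ⊗ₜ[k] (1 : F))
  -- multiplicativity: `ρ(uv) = u⁽¹⁾₍₀₎ v₍₀₎ ⊗ u⁽¹⁾₍₁₎ (u⁽²⁾ ▷ v₍₁₎)`
  ∧ (ρU ∘ₗ (LinearMap.mul' k U)
      = letI ζ : (((U ⊗[k] F) ⊗[k] U) ⊗[k] F) →ₗ[k] U ⊗[k] F :=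
          (TensorProduct.map (LinearMap.mul' k U) (LinearMap.mul' k F))
            ∘ₗ asc k (U ⊗[k] U) F F
            ∘ₗ ((ascs k U U F ∘ₗ ((cmm k F U).lTensor U) ∘ₗ asc k U F U).rTensor F)
        ζ ∘ₗ (α.lTensor ((U ⊗[k] F) ⊗[k] U))
          ∘ₗ mid4 k (U ⊗[k] F) U U F
          ∘ₗ ((ρU.rTensor U).rTensor (U ⊗[k] F))
          ∘ₗ (TensorProduct.map (Coalgebra.comul (R := k) (A := U)) ρU))
  -- compatibility: `u⁽²⁾₍₀₎ ⊗ (u⁽¹⁾ ▷ f) u⁽²⁾₍₁₎ = u⁽¹⁾₍₀₎ ⊗ u⁽¹⁾₍₁₎ (u⁽²⁾ ▷ f)`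
  ∧ (((opMul k F (LinearMap.mul' k F)).lTensor U) ∘ₗ asc k U F F
        ∘ₗ (α.lTensor (U ⊗[k] F)) ∘ₗ asc k (U ⊗[k] F) U F
        ∘ₗ ((cmm k U (U ⊗[k] F)).rTensor F) ∘ₗ ((ρU.lTensor U).rTensor F)
        ∘ₗ ((Coalgebra.comul (R := k) (A := U)).rTensor F)
      = ((LinearMap.mul' k F).lTensor U) ∘ₗ asc k U F F
          ∘ₗ (α.lTensor (U ⊗[k] F)) ∘ₗ asc k (U ⊗[k] F) U F
          ∘ₗ ((ρU.rTensor U).rTensor F)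
          ∘ₗ ((Coalgebra.comul (R := k) (A := U)).rTensor F))
  -- compatibility: `Δ_F(u ▷ f) = (u⁽¹⁾₍₀₎ ▷ f⁽¹⁾) ⊗ u⁽¹⁾₍₁₎ (u⁽²⁾ ▷ f⁽²⁾)`
  ∧ ((Coalgebra.comul (R := k) (A := F)) ∘ₗ α
      = letI ξ : (U ⊗[k] F) ⊗[k] F →ₗ[k] F ⊗[k] F :=
          (α.rTensor F) ∘ₗ ascs k U F F ∘ₗ ((cmm k F F).lTensor U) ∘ₗ asc k U F F
        ((LinearMap.mul' k F).lTensor F) ∘ₗ asc k F F F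
          ∘ₗ (TensorProduct.map ξ α)
          ∘ₗ mid4 k (U ⊗[k] F) U F F
          ∘ₗ ((ρU.rTensor U).rTensor (F ⊗[k] F))
          ∘ₗ (TensorProduct.map (Coalgebra.comul (R := k) (A := U))
                (Coalgebra.comul (R := k) (A := F))))
  -- compatibility: `ε(u ▷ f) = ε(u) ε(f)`
  ∧ (∀ (u : U) (f : F),
      Coalgebra.counit (R := k) (α (u ⊗ₜ[k] f))
        = Coalgebra.counit (R := k) u * Coalgebra.counit (R := k) f)

end Bicross
section CrossedProduct
variable {H : Type} [Ring H] [Algebra k H]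
variable {A B : Type} [Ring A] [Algebra k A] [Ring B] [Algebra k B]

/-- the multiplication of the crossed product algebra `A ⋊ B` for a left `H`-module
algebra `A` (action `β`) and a left `H`-comodule algebra `B` (coaction `ρB`):
`(a ⋊ b)(a' ⋊ b') = a (b₍₋₁₎ · a') ⋊ b₍₀₎ b'`. -/
def crossMul (β : H ⊗[k] A →ₗ[k] A) (ρB : B →ₗ[k] H ⊗[k] B) :
    (A ⊗[k] B) ⊗[k] (A ⊗[k] B) →ₗ[k] A ⊗[k] B :=
  letI lam : (A ⊗[k] H) ⊗[k] A →ₗ[k] A :=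
    (LinearMap.mul' k A) ∘ₗ (β.lTensor A) ∘ₗ asc k A H A
  (TensorProduct.map lam (LinearMap.mul' k B))
    ∘ₗ mid4 k (A ⊗[k] H) B A B
    ∘ₗ ((ascs k A H B).rTensor (A ⊗[k] B))
    ∘ₗ ((ρB.lTensor A).rTensor (A ⊗[k] B))

end CrossedProduct

section SimplicialOps
variable {R : Type} [AddCommGroup R] [Module k R]

/-- the rotation `a₀ ⊗ ⋯ ⊗ aₙ ↦ aₙ ⊗ a₀ ⊗ ⋯ ⊗ aₙ₋₁` on `Tpow k R (n+1)`. -/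
def rot (n : ℕ) : (Tpow k R (n+1) : Type) →ₗ[k] (Tpow k R (n+1) : Type) :=
  cmm k (Tpow k R n : Type) R ∘ₗ (epow k R n).toLinearMap

/-- `merge μ n i` multiplies the `i`-th and `(i+1)`-st tensor factors of `Tpow k R (n+2)`
(for `0 ≤ i ≤ n`; values at out-of-range indices are junk). -/
def merge (μ : R ⊗[k] R →ₗ[k] R) :
    ∀ (n i : ℕ), (Tpow k R (n+2) : Type) →ₗ[k] (Tpow k R (n+1) : Type)
  | n, 0 => (μ.rTensor (Tpow k R n : Type)) ∘ₗ ascs k R R (Tpow k R n : Type)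
  | 0, _+1 => (μ.rTensor (Tpow k R 0 : Type)) ∘ₗ ascs k R R (Tpow k R 0 : Type)
  | n+1, i+1 => (merge μ n i).lTensor R

/-- `ins e n i` inserts the element `e` in position `i+1` of `Tpow k R (n+1)`
(for `0 ≤ i ≤ n`; values at out-of-range indices are junk). -/
def ins (e : R) : ∀ (n i : ℕ), (Tpow k R (n+1) : Type) →ₗ[k] (Tpow k R (n+2) : Type)
  | n, 0 => (TensorProduct.mk k R (Tpow k R n : Type) e).lTensor R
  | 0, _+1 => (TensorProduct.mk k R (Tpow k R 0 : Type) e).lTensor R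
  | n+1, i+1 => (ins e n i).lTensor R

/-- the `i`-th coface operator of the standard cocyclic module of an algebra `(R, μ)`
(on cochains `Hom(R^{⊗(n+1)}, V)`); `i = n+1` is the twisted last coface
`(δ_{n+1} f)(r₀ ⊗ ⋯ ⊗ r_{n+1}) = f(r_{n+1} r₀ ⊗ r₁ ⊗ ⋯ ⊗ rₙ)`. -/
def faceAlg {V : Type} [AddCommGroup V] [Module k V] (μ : R ⊗[k] R →ₗ[k] R) (n i : ℕ)
    (f : (Tpow k R (n+1) : Type) →ₗ[k] V) : (Tpow k R (n+2) : Type) →ₗ[k] V :=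
  if i = n+1 then f ∘ₗ merge k μ n 0 ∘ₗ rot k (n+1) else f ∘ₗ merge k μ n i

/-- the `i`-th codegeneracy operator of the standard cocyclic module of an algebra. -/
def degAlg {V : Type} [AddCommGroup V] [Module k V] (e : R) (n i : ℕ)
    (f : (Tpow k R (n+2) : Type) →ₗ[k] V) : (Tpow k R (n+1) : Type) →ₗ[k] V :=
  f ∘ₗ ins k e n i

/-- the cyclic operator of the standard cocyclic module of an algebra:
`(τₙ f)(r₀ ⊗ ⋯ ⊗ rₙ) = f(rₙ ⊗ r₀ ⊗ ⋯ ⊗ rₙ₋₁)`. -/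
def cycAlg {V : Type} [AddCommGroup V] [Module k V] (n : ℕ)
    (f : (Tpow k R (n+1) : Type) →ₗ[k] V) : (Tpow k R (n+1) : Type) →ₗ[k] V :=
  f ∘ₗ rot k n

/-- the Hochschild coboundary `b = Σ_{i=0}^{n+1} (-1)^i δᵢ` of the standard (twisted)
cocyclic module of an algebra `(R, μ)`. -/
def bAlg {V : Type} [AddCommGroup V] [Module k V] (μ : R ⊗[k] R →ₗ[k] R) (n : ℕ)
    (f : (Tpow k R (n+1) : Type) →ₗ[k] V) : (Tpow k R (n+2) : Type) →ₗ[k] V :=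
  ∑ i ∈ Finset.range (n+2), ((-1 : ℤ)^i) • faceAlg k μ n i f

end SimplicialOps
section ModAlgSide
variable {H : Type} [Ring H] [HopfAlgebra k H]
variable {A M : Type} [AddCommGroup A] [Module k A] [AddCommGroup M] [Module k M]

/-- the diagonal left action of `H` on `Tpow k A n` induced by a left action `β` on `A`:
`h · (a₁ ⊗ ⋯ ⊗ aₙ) = h⁽¹⁾·a₁ ⊗ ⋯ ⊗ h⁽ⁿ⁾·aₙ`. -/
def actTpow (β : H ⊗[k] A →ₗ[k] A) :
    ∀ n : ℕ, H ⊗[k] (Tpow k A n : Type) →ₗ[k] (Tpow k A n : Type)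
  | 0 => (TensorProduct.lid k k).toLinearMap
      ∘ₗ ((Coalgebra.counit (R := k) (A := H)).rTensor k)
  | n+1 => (TensorProduct.map β (actTpow β n)) ∘ₗ mid4 k H H A (Tpow k A n : Type)
      ∘ₗ ((Coalgebra.comul (R := k) (A := H)).rTensor (A ⊗[k] (Tpow k A n : Type)))

/-- the left action of `H` on `M ⊗ A^{⊗(n+1)}` used to define the HKRS cocyclic module
of a module algebra: `h · (m ⊗ ã) = m · S(h⁽¹⁾) ⊗ h⁽²⁾ · ã`. -/
def actMA (β : H ⊗[k] A →ₗ[k] A) (act : M ⊗[k] H →ₗ[k] M) (n : ℕ) :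
    H ⊗[k] (M ⊗[k] (Tpow k A (n+1) : Type)) →ₗ[k] M ⊗[k] (Tpow k A (n+1) : Type) :=
  letI w : H ⊗[k] M →ₗ[k] M :=
    act ∘ₗ cmm k H M ∘ₗ ((HopfAlgebra.antipode (R := k)).rTensor M)
  (TensorProduct.map w (actTpow k β (n+1)))
    ∘ₗ mid4 k H H M (Tpow k A (n+1) : Type)
    ∘ₗ ((Coalgebra.comul (R := k) (A := H)).rTensor (M ⊗[k] (Tpow k A (n+1) : Type)))

/-- `φ : M ⊗ A^{⊗(n+1)} → k` is `H`-equivariant (i.e. `φ ∈ Hom_H(M ⊗ A^{⊗(n+1)}, k)`),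
with `k` the trivial `H`-module. -/
def IsInvariantMA (β : H ⊗[k] A →ₗ[k] A) (act : M ⊗[k] H →ₗ[k] M) (n : ℕ)
    (φ : (M ⊗[k] (Tpow k A (n+1) : Type)) →ₗ[k] k) : Prop :=
  φ ∘ₗ actMA k β act n
    = φ ∘ₗ (TensorProduct.lid k (M ⊗[k] (Tpow k A (n+1) : Type))).toLinearMap
        ∘ₗ ((Coalgebra.counit (R := k) (A := H)).rTensor
              (M ⊗[k] (Tpow k A (n+1) : Type)))

/-- the twisted rotation on `M ⊗ A^{⊗(n+1)}`:
`m ⊗ a₀ ⊗ ⋯ ⊗ aₙ ↦ m₍₀₎ ⊗ S⁻¹(m₍₋₁₎)·aₙ ⊗ a₀ ⊗ ⋯ ⊗ aₙ₋₁`. -/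
def rotMA (β : H ⊗[k] A →ₗ[k] A) (Sinv : H →ₗ[k] H) (ρM : M →ₗ[k] H ⊗[k] M) (n : ℕ) :
    M ⊗[k] (Tpow k A (n+1) : Type) →ₗ[k] M ⊗[k] (Tpow k A (n+1) : Type) :=
  (TensorProduct.leftComm k A M (Tpow k A n : Type)).toLinearMap
    ∘ₗ ((β ∘ₗ (Sinv.rTensor A)).rTensor (M ⊗[k] (Tpow k A n : Type)))
    ∘ₗ mid4 k H M A (Tpow k A n : Type)
    ∘ₗ ((rot k n).lTensor (H ⊗[k] M))
    ∘ₗ (ρM.rTensor (Tpow k A (n+1) : Type))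

/-- the cyclic operator of the HKRS cocyclic module `C^n_H(A, M) = Hom_H(M ⊗ A^{⊗(n+1)}, k)`:
`(τₙ φ)(m ⊗ a₀ ⊗ ⋯ ⊗ aₙ) = φ(m₍₀₎ ⊗ S⁻¹(m₍₋₁₎)·aₙ ⊗ a₀ ⊗ ⋯ ⊗ aₙ₋₁)`. -/
def cycMA (β : H ⊗[k] A →ₗ[k] A) (Sinv : H →ₗ[k] H) (ρM : M →ₗ[k] H ⊗[k] M) (n : ℕ)
    (φ : (M ⊗[k] (Tpow k A (n+1) : Type)) →ₗ[k] k) :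
    (M ⊗[k] (Tpow k A (n+1) : Type)) →ₗ[k] k :=
  φ ∘ₗ rotMA k β Sinv ρM n


/-- `M` is an `_A H`-SAYD coefficient module for the left `H`-module algebra `A` (in the
generalized sense): the cyclic operator of the HKRS cocyclic module
`C^n_H(A,M) = Hom_H(M ⊗ A^{⊗(n+1)}, k)` is well defined on equivariant cochains and
satisfies `τₙ^{n+1} = id`. -/
def IsMASAYD (β : H ⊗[k] A →ₗ[k] A) (Sinv : H →ₗ[k] H) (ρM : M →ₗ[k] H ⊗[k] M)
    (act : M ⊗[k] H →ₗ[k] M) : Prop :=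
  ∀ n : ℕ, ∀ φ : (M ⊗[k] (Tpow k A (n+1) : Type)) →ₗ[k] k,
    IsInvariantMA k β act n φ →
      IsInvariantMA k β act n (cycMA k β Sinv ρM n φ)
      ∧ (cycMA k β Sinv ρM n)^[n+1] φ = φ

end ModAlgSide

section ModAlgSideRing
variable {H : Type} [Ring H] [HopfAlgebra k H]
variable {A M : Type} [Ring A] [Algebra k A] [AddCommGroup M] [Module k M]

/-- the `i`-th coface of the HKRS cocyclic module `C^n_H(A, M)`; `i = n+1` is the twisted
last coface `(δ_{n+1} φ)(m ⊗ a₀ ⊗ ⋯ ⊗ a_{n+1}) = φ(m₍₀₎ ⊗ (S⁻¹(m₍₋₁₎)·a_{n+1}) a₀ ⊗ ⋯ ⊗ aₙ)`. -/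
def faceMA (β : H ⊗[k] A →ₗ[k] A) (Sinv : H →ₗ[k] H) (ρM : M →ₗ[k] H ⊗[k] M)
    (n i : ℕ) (φ : (M ⊗[k] (Tpow k A (n+1) : Type)) →ₗ[k] k) :
    (M ⊗[k] (Tpow k A (n+2) : Type)) →ₗ[k] k :=
  if i = n+1 then
    φ ∘ₗ ((merge k (LinearMap.mul' k A) n 0).lTensor M) ∘ₗ rotMA k β Sinv ρM (n+1)
  else φ ∘ₗ ((merge k (LinearMap.mul' k A) n i).lTensor M)

/-- the `i`-th codegeneracy of the HKRS cocyclic module `C^n_H(A, M)`. -/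
def degMA (n i : ℕ) (φ : (M ⊗[k] (Tpow k A (n+2) : Type)) →ₗ[k] k) :
    (M ⊗[k] (Tpow k A (n+1) : Type)) →ₗ[k] k :=
  φ ∘ₗ ((ins k (1 : A) n i).lTensor M)

/-- the Hochschild coboundary of the HKRS cocyclic module `C^n_H(A, M)`. -/
def bMA (β : H ⊗[k] A →ₗ[k] A) (Sinv : H →ₗ[k] H) (ρM : M →ₗ[k] H ⊗[k] M)
    (n : ℕ) (φ : (M ⊗[k] (Tpow k A (n+1) : Type)) →ₗ[k] k) :
    (M ⊗[k] (Tpow k A (n+2) : Type)) →ₗ[k] k :=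
  ∑ i ∈ Finset.range (n+2), ((-1 : ℤ)^i) • faceMA k β Sinv ρM n i φ

end ModAlgSideRing

section ComodAlgSide
variable {H : Type} [Ring H] [HopfAlgebra k H]
variable {B M : Type} [Ring B] [Algebra k B] [AddCommGroup M] [Module k M]

/-- the `i`-th coface of the cocyclic module `C^n_H(B, M) = Hom^H(B^{⊗(n+1)}, M)` of a left
`H`-comodule algebra `B`; `i = n+1` is the twisted last coface
`(δ_{n+1} f)(b₀ ⊗ ⋯ ⊗ b_{n+1}) = f(b_{n+1}₍₀₎ b₀ ⊗ b₁ ⊗ ⋯ ⊗ bₙ) · b_{n+1}₍₋₁₎`. -/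
def faceCB (ρB : B →ₗ[k] H ⊗[k] B) (act : M ⊗[k] H →ₗ[k] M) (n i : ℕ)
    (f : (Tpow k B (n+1) : Type) →ₗ[k] M) : (Tpow k B (n+2) : Type) →ₗ[k] M :=
  if i = n+1 then
    act ∘ₗ cmm k H M ∘ₗ ((f ∘ₗ merge k (LinearMap.mul' k B) n 0).lTensor H)
      ∘ₗ rotρL k ρB (n+1)
  else f ∘ₗ merge k (LinearMap.mul' k B) n i

/-- the `i`-th codegeneracy of `C^n_H(B, M)`. -/
def degCB (n i : ℕ) (f : (Tpow k B (n+2) : Type) →ₗ[k] M) :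
    (Tpow k B (n+1) : Type) →ₗ[k] M :=
  f ∘ₗ ins k (1 : B) n i

/-- the Hochschild coboundary of `C^n_H(B, M)`. -/
def bCB (ρB : B →ₗ[k] H ⊗[k] B) (act : M ⊗[k] H →ₗ[k] M) (n : ℕ)
    (f : (Tpow k B (n+1) : Type) →ₗ[k] M) : (Tpow k B (n+2) : Type) →ₗ[k] M :=
  ∑ i ∈ Finset.range (n+2), ((-1 : ℤ)^i) • faceCB k ρB act n i f

end ComodAlgSide
section PsiSec
variable {H : Type} [Ring H] [HopfAlgebra k H]
variable {A B M : Type} [AddCommGroup A] [Module k A] [AddCommGroup B] [Module k B]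
  [AddCommGroup M] [Module k M]

/-- the auxiliary "unzipping" map `(A ⊗ B)^{⊗ n} → H ⊗ (A^{⊗ n} ⊗ B^{⊗ n})` underlying the
cup-product map `Ψ`:
`(a₀ ⊗ b₀) ⊗ ⋯ ⊗ (aₙ ⊗ bₙ) ↦ b₀₍₋₁₎ ⋯ bₙ₍₋₁₎ ⊗
  ((S⁻¹(b₀₍₋₁₎ ⋯ bₙ₍₋₁₎)·a₀ ⊗ S⁻¹(b₁₍₋₁₎ ⋯ bₙ₍₋₁₎)·a₁ ⊗ ⋯) ⊗ (b₀₍₀₎ ⊗ ⋯ ⊗ bₙ₍₀₎))`. -/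
def Gmap (β : H ⊗[k] A →ₗ[k] A) (Sinv : H →ₗ[k] H) (ρB : B →ₗ[k] H ⊗[k] B) :
    ∀ n : ℕ, (Tpow k (A ⊗[k] B) n : Type) →ₗ[k]
      H ⊗[k] ((Tpow k A n : Type) ⊗[k] (Tpow k B n : Type))
  | 0 => (TensorProduct.mk k H (k ⊗[k] k) 1) ∘ₗ ((TensorProduct.mk k k k).flip 1)
  | n+1 =>
    letI TA : Type := (Tpow k A n : Type)
    letI TB : Type := (Tpow k B n : Type)
    letI inner : (H ⊗[k] (A ⊗[k] B)) ⊗[k] (H ⊗[k] (TA ⊗[k] TB)) →ₗ[k]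
        (A ⊗[k] TA) ⊗[k] (B ⊗[k] TB) :=
      (((β.rTensor TA) ∘ₗ ascs k H A TA).rTensor (B ⊗[k] TB))
        ∘ₗ ascs k H (A ⊗[k] TA) (B ⊗[k] TB)
        ∘ₗ ((mid4 k A B TA TB).lTensor H)
        ∘ₗ ((Sinv ∘ₗ LinearMap.mul' k H).rTensor ((A ⊗[k] B) ⊗[k] (TA ⊗[k] TB)))
        ∘ₗ mid4 k H (A ⊗[k] B) H (TA ⊗[k] TB)
    (inner.lTensor H)
      ∘ₗ ((LinearMap.mul' k H).rTensor
            ((H ⊗[k] (A ⊗[k] B)) ⊗[k] (H ⊗[k] (TA ⊗[k] TB))))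
      ∘ₗ mid4 k H (H ⊗[k] (A ⊗[k] B)) H (H ⊗[k] (TA ⊗[k] TB))
      ∘ₗ (TensorProduct.map
            (((TensorProduct.leftComm k A H B).toLinearMap.lTensor H)
              ∘ₗ (TensorProduct.leftComm k A H (H ⊗[k] B)).toLinearMap)
            (asc k H H (TA ⊗[k] TB)))
      ∘ₗ ((((Coalgebra.comul (R := k) (A := H)).rTensor (TA ⊗[k] TB)).lTensor
            (A ⊗[k] (H ⊗[k] (H ⊗[k] B)))))
      ∘ₗ ((((ρB.lTensor H ∘ₗ ρB).lTensor A)).rTensor (H ⊗[k] (TA ⊗[k] TB)))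
      ∘ₗ ((Gmap β Sinv ρB n).lTensor (A ⊗[k] B))

/-- the cup-product cochain map
`Ψ(φ ⊗ ψ)(a₀ ⋊ b₀ ⊗ ⋯ ⊗ aₙ ⋊ bₙ)
  = φ(ψ(b₀₍₀₎ ⊗ ⋯ ⊗ bₙ₍₀₎) ⊗ S⁻¹(b₀₍₋₁₎ ⋯ bₙ₍₋₁₎)·a₀ ⊗ ⋯ ⊗ S⁻¹(bₙ₍₋₁₎)·aₙ)`. -/
def Psi (β : H ⊗[k] A →ₗ[k] A) (Sinv : H →ₗ[k] H) (ρB : B →ₗ[k] H ⊗[k] B) (n : ℕ)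
    (φ : (M ⊗[k] (Tpow k A (n+1) : Type)) →ₗ[k] k)
    (ψ : (Tpow k B (n+1) : Type) →ₗ[k] M) :
    (Tpow k (A ⊗[k] B) (n+1) : Type) →ₗ[k] k :=
  φ ∘ₗ cmm k (Tpow k A (n+1) : Type) M
    ∘ₗ (ψ.lTensor (Tpow k A (n+1) : Type))
    ∘ₗ (TensorProduct.lid k ((Tpow k A (n+1) : Type) ⊗[k] (Tpow k B (n+1) : Type))).toLinearMap
    ∘ₗ ((Coalgebra.counit (R := k) (A := H)).rTensor
          ((Tpow k A (n+1) : Type) ⊗[k] (Tpow k B (n+1) : Type)))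
    ∘ₗ Gmap k β Sinv ρB (n+1)

end PsiSec

section Casts
variable {R : Type} [AddCommGroup R] [Module k R]

/-- transport along an equality of tensor-power indices. -/
def tcast (R : Type) [AddCommGroup R] [Module k R] {m n : ℕ} (e : m = n) :
    (Tpow k R m : Type) →ₗ[k] (Tpow k R n : Type) := by
  subst e; exact LinearMap.id

end Casts

section Iterates
variable {H : Type} [Ring H] [HopfAlgebra k H]

/-- iterated last coface on the HKRS complex `C^•_H(A,M)`, lifting a `p`-cochain to a
`(p+q)`-cochain (one factor of the Alexander--Whitney map). -/
def iterLastMA {A M : Type} [Ring A] [Algebra k A] [AddCommGroup M] [Module k M]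
    (β : H ⊗[k] A →ₗ[k] A) (Sinv : H →ₗ[k] H) (ρM : M →ₗ[k] H ⊗[k] M) (p : ℕ) :
    ∀ q : ℕ, ((M ⊗[k] (Tpow k A (p+1) : Type)) →ₗ[k] k) →
      ((M ⊗[k] (Tpow k A (p+q+1) : Type)) →ₗ[k] k)
  | 0, φ => φ
  | q+1, φ => faceMA k β Sinv ρM (p+q) (p+q+1) (iterLastMA β Sinv ρM p q φ)

/-- iterated zeroth coface on the complex `C^•_H(B,M)`, lifting a `q`-cochain to a
`(q+p)`-cochain (the other factor of the Alexander--Whitney map). -/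
def iterFace0CB {B M : Type} [Ring B] [Algebra k B] [AddCommGroup M] [Module k M]
    (ρB : B →ₗ[k] H ⊗[k] B) (act : M ⊗[k] H →ₗ[k] M) (q : ℕ) :
    ∀ p : ℕ, ((Tpow k B (q+1) : Type) →ₗ[k] M) → ((Tpow k B (q+p+1) : Type) →ₗ[k] M)
  | 0, ψ => ψ
  | p+1, ψ => faceCB k ρB act (q+p) 0 (iterFace0CB ρB act q p ψ)

/-- the cup product `⊔ = Ψ ∘ AW` of a `p`-cochain of `C^•_H(A,M)` and a `q`-cochain of
`C^•_H(B,M)`, a `(p+q)`-cochain of the cyclic complex of `A ⋊ B`. -/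
def cupAW {A B M : Type} [Ring A] [Algebra k A] [Ring B] [Algebra k B]
    [AddCommGroup M] [Module k M]
    (β : H ⊗[k] A →ₗ[k] A) (Sinv : H →ₗ[k] H) (ρB : B →ₗ[k] H ⊗[k] B)
    (ρM : M →ₗ[k] H ⊗[k] M) (act : M ⊗[k] H →ₗ[k] M) (p q : ℕ)
    (φ : (M ⊗[k] (Tpow k A (p+1) : Type)) →ₗ[k] k)
    (ψ : (Tpow k B (q+1) : Type) →ₗ[k] M) :
    (Tpow k (A ⊗[k] B) (p+q+1) : Type) →ₗ[k] k :=
  Psi k β Sinv ρB (p+q) (iterLastMA k β Sinv ρM p q φ)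
    ((iterFace0CB k ρB act q p ψ) ∘ₗ tcast k B (show p+q+1 = q+p+1 by omega))

end Iterates


/-!
Write `x₍₋₁₎ ⊗ x₍₀₎` for the diagonal coaction on `A^{⊗(n+1)}`. As `M` carries the trivial
coaction, `φ` is colinear iff `x₍₋₁₎ ⊗ φ(x₍₀₎) = 1 ⊗ φ(x)`.

Colinearity of `τφ`: split off the last factor, `x = b̃ ⊗ a`. By coassociativity,
`x₍₋₁₎ ⊗ τφ(x₍₀₎) = b̃₍₋₁₎a₍₋₁₎⁽¹⁾ ⊗ φ(a₍₀₎ ⊗ b̃₍₀₎)·a₍₋₁₎⁽²⁾`; cocommutativity turns this into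
`a₍₋₁₎⁽²⁾b̃₍₋₁₎ ⊗ φ(a₍₀₎ ⊗ b̃₍₀₎)·a₍₋₁₎⁽¹⁾`, which by coassociativity again is
`(a₍₀₎ ⊗ b̃)₍₋₁₎ ⊗ φ((a₍₀₎ ⊗ b̃)₍₀₎)·a₍₋₁₎ = 1 ⊗ φ(a₍₀₎ ⊗ b̃)·a₍₋₁₎ = 1 ⊗ τφ(x)`.

Periodicity: `τᵐφ(x) = φ(Rₘ(x)₍₀₎)·Rₘ(x)₍₋₁₎`, where `Rₘ` rotates `m` times and multiplies up
the coaction coefficients picked up on the way. After `n + 1` rotations every factor is back in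
place and has been coacted exactly once, so `Rₙ₊₁` is the diagonal coaction and
`τⁿ⁺¹φ(x) = φ(x₍₀₎)·x₍₋₁₎ = φ(x)·1 = φ(x)`. The identification of `Rₙ₊₁` is by induction on `n`:
for `m ≤ n + 1`, `m` rotations of `a ⊗ y` are `m` rotations of `y` followed by moving `a` to
position `m`.
-/

-- lets `rw` see `Tpow k A (n + 1)` as `A ⊗[k] Tpow k A n`
attribute [reducible] Tpow

section LeftComm
variable (X Y Z : Type) [AddCommGroup X] [Module k X] [AddCommGroup Y] [Module k Y]
  [AddCommGroup Z] [Module k Z]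

abbrev lcm : X ⊗[k] (Y ⊗[k] Z) →ₗ[k] Y ⊗[k] (X ⊗[k] Z) :=
  (TensorProduct.leftComm k X Y Z).toLinearMap

theorem lcm_comp_lcm : lcm k Y X Z ∘ₗ lcm k X Y Z = LinearMap.id := by
  ext; rfl

end LeftComm

section Colinear
variable {k} {H : Type} [Ring H] [HopfAlgebra k H]
variable {U V W M : Type} [AddCommGroup U] [Module k U] [AddCommGroup V] [Module k V]
  [AddCommGroup W] [Module k W] [AddCommGroup M] [Module k M]

theorem IsColinL.comp {ρU : U →ₗ[k] H ⊗[k] U} {ρV : V →ₗ[k] H ⊗[k] V}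
    {ρM : M →ₗ[k] H ⊗[k] M} {g : V →ₗ[k] M} {f : U →ₗ[k] V}
    (hg : IsColinL k ρV ρM g) (hf : IsColinL k ρU ρV f) : IsColinL k ρU ρM (g ∘ₗ f) := by
  unfold IsColinL at *
  rw [← comp_assoc, hg, comp_assoc, hf, ← comp_assoc, ← lTensor_comp]

theorem IsColinL.lTensor (ρU : U →ₗ[k] H ⊗[k] U) {ρV : V →ₗ[k] H ⊗[k] V}
    {ρW : W →ₗ[k] H ⊗[k] W} {f : V →ₗ[k] W} (hf : IsColinL k ρV ρW f) :
    IsColinL k (diagL k (mul' k H) ρU ρV) (diagL k (mul' k H) ρU ρW) (f.lTensor U) := by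
  -- `ext; rfl` only closes such identities when the coactions hit pure tensors, so here and
  -- below they are first split off on the right
  have hmid : (mul' k H).rTensor (U ⊗[k] W) ∘ₗ mid4 k H U H W ∘ₗ (f.lTensor H).lTensor (H ⊗[k] U)
      = (f.lTensor U).lTensor H ∘ₗ (mul' k H).rTensor (U ⊗[k] V) ∘ₗ mid4 k H U H V := by
    ext; rfl
  calc _ = (mul' k H).rTensor (U ⊗[k] W) ∘ₗ mid4 k H U H W ∘ₗ map ρU (ρW ∘ₗ f) := by ext; rfl
    _ = _ ∘ₗ map ρU ρV := by rw [hf, ← lTensor_comp_map]; rfl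
    _ = _ := congrArg (· ∘ₗ map ρU ρV) hmid

theorem isColinL_ascs (ρU : U →ₗ[k] H ⊗[k] U) (ρV : V →ₗ[k] H ⊗[k] V) (ρW : W →ₗ[k] H ⊗[k] W) :
    IsColinL k (diagL k (mul' k H) ρU (diagL k (mul' k H) ρV ρW))
      (diagL k (mul' k H) (diagL k (mul' k H) ρU ρV) ρW) (ascs k U V W) := by
  have hmul : (mul' k H).rTensor ((U ⊗[k] V) ⊗[k] W) ∘ₗ mid4 k H (U ⊗[k] V) H W
        ∘ₗ ((mul' k H).rTensor (U ⊗[k] V) ∘ₗ mid4 k H U H V).rTensor (H ⊗[k] W)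
        ∘ₗ ascs k (H ⊗[k] U) (H ⊗[k] V) (H ⊗[k] W)
      = (ascs k U V W).lTensor H ∘ₗ (mul' k H).rTensor (U ⊗[k] (V ⊗[k] W))
        ∘ₗ mid4 k H U H (V ⊗[k] W)
        ∘ₗ ((mul' k H).rTensor (V ⊗[k] W) ∘ₗ mid4 k H V H W).lTensor (H ⊗[k] U) := by
    ext; simp [mul_assoc]
  calc _ = _ ∘ₗ map ρU (map ρV ρW) := by ext; rfl
    _ = _ := congrArg (· ∘ₗ map ρU (map ρV ρW)) hmul
    _ = _ := by ext; rfl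

theorem isColinL_cmm_trivL (ρV : V →ₗ[k] H ⊗[k] V) :
    IsColinL k (diagL k (mul' k H) ρV (trivL k H k)) (diagL k (mul' k H) (trivL k H k) ρV)
      (cmm k V k) := by
  have hswap : (cmm k V k).lTensor H ∘ₗ (mul' k H).rTensor (V ⊗[k] k)
        ∘ₗ mid4 k H V H k ∘ₗ (trivL k H k).lTensor (H ⊗[k] V)
      = (mul' k H).rTensor (k ⊗[k] V) ∘ₗ mid4 k H k H V
        ∘ₗ (trivL k H k).rTensor (H ⊗[k] V) ∘ₗ cmm k (H ⊗[k] V) k := by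
    ext; simp [trivL]
  calc _ = _ ∘ₗ ρV.rTensor k := by ext; rfl
    _ = _ := congrArg (· ∘ₗ ρV.rTensor k) hswap.symm
    _ = _ := by ext; rfl

theorem isColinL_epow {A : Type} [AddCommGroup A] [Module k A] (ρA : A →ₗ[k] H ⊗[k] A) (n : ℕ) :
    IsColinL k (TpowρL k (mul' k H) ρA (n + 1))
      (diagL k (mul' k H) (TpowρL k (mul' k H) ρA n) ρA) (epow k A n).toLinearMap := by
  induction n with
  | zero => exact isColinL_cmm_trivL ρA
  | succ n ih => exact (isColinL_ascs ρA (TpowρL k (mul' k H) ρA n) ρA).comp (ih.lTensor ρA)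

end Colinear

section CyclicColinear
variable {k} {H : Type} [Ring H] [HopfAlgebra k H]
variable {A W M : Type} [AddCommGroup A] [Module k A] [AddCommGroup W] [Module k W]
  [AddCommGroup M] [Module k M]
variable (ρA : A →ₗ[k] H ⊗[k] A) (ρW : W →ₗ[k] H ⊗[k] W) (act : M ⊗[k] H →ₗ[k] M)

def coactFst (X : Type) [AddCommGroup X] [Module k X] : A ⊗[k] X →ₗ[k] H ⊗[k] (A ⊗[k] X) :=
  asc k H A X ∘ₗ ρA.rTensor X

/-- `a ⊗ w ↦ φ(a₍₀₎ ⊗ w) · a₍₋₁₎` -/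
def actCoactFst (φ : A ⊗[k] W →ₗ[k] M) : A ⊗[k] W →ₗ[k] M :=
  act ∘ₗ cmm k H M ∘ₗ φ.lTensor H ∘ₗ coactFst ρA W

/-- `(p ⊗ q) ⊗ x ↦ p ⊗ φ(x) · q` -/
def actSnd {X : Type} [AddCommGroup X] [Module k X] (φ : X →ₗ[k] M) :
    (H ⊗[k] H) ⊗[k] X →ₗ[k] H ⊗[k] M :=
  (act ∘ₗ cmm k H M).lTensor H ∘ₗ asc k H H M ∘ₗ φ.lTensor (H ⊗[k] H)

/-- `a ⊗ w ↦ ((a₍₋₁₎⁽¹⁾ ⊗ a₍₋₁₎⁽²⁾) ⊗ w₍₋₁₎) ⊗ (a₍₀₎ ⊗ w₍₀₎)`, the map on which `CocommCondL`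
compares `muL` and `muR`. -/
def cocommBase : A ⊗[k] W →ₗ[k] ((H ⊗[k] H) ⊗[k] H) ⊗[k] (A ⊗[k] W) :=
  mid4 k (H ⊗[k] H) A H W ∘ₗ map ((Coalgebra.comul (R := k) (A := H)).rTensor A ∘ₗ ρA) ρW

variable {ρA}

theorem cocommBase_eq (hA : IsCoassocL k ρA) :
    cocommBase ρA ρW = (mid4 k (H ⊗[k] H) A H W ∘ₗ (ascs k H H A).rTensor (H ⊗[k] W))
      ∘ₗ map (ρA.lTensor H ∘ₗ ρA) ρW := by
  have hΔ : (Coalgebra.comul (R := k) (A := H)).rTensor A ∘ₗ ρA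
      = ascs k H H A ∘ₗ ρA.lTensor H ∘ₗ ρA := by
    rw [hA, LinearEquiv.symm_comp_cancel_left]
  rw [cocommBase, hΔ]
  ext; rfl

theorem trivL_comp_actCoactFst (hA : IsCoassocL k ρA) {φ : A ⊗[k] W →ₗ[k] M}
    (hφ : IsColinL k (diagL k (mul' k H) ρA ρW) (trivL k H M) φ) :
    trivL k H M ∘ₗ actCoactFst ρA act φ
      = actSnd act φ ∘ₗ (muR k (mul' k H)).rTensor (A ⊗[k] W) ∘ₗ cocommBase ρA ρW := by
  have hact : trivL k H M ∘ₗ act ∘ₗ cmm k H M ∘ₗ φ.lTensor H ∘ₗ asc k H A W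
      = (act ∘ₗ cmm k H M).lTensor H ∘ₗ lcm k H H M ∘ₗ (trivL k H M ∘ₗ φ).lTensor H
        ∘ₗ asc k H A W := by
    ext; rfl
  have hasc : asc k H (H ⊗[k] A) (H ⊗[k] W) ∘ₗ map (ρA.lTensor H) ρW
      = (map ρA ρW).lTensor H ∘ₗ asc k H A W := by
    ext; rfl
  have hmul : (act ∘ₗ cmm k H M).lTensor H ∘ₗ lcm k H H M
        ∘ₗ (φ.lTensor H ∘ₗ (mul' k H).rTensor (A ⊗[k] W) ∘ₗ mid4 k H A H W).lTensor H
        ∘ₗ asc k H (H ⊗[k] A) (H ⊗[k] W)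
      = actSnd act φ ∘ₗ (muR k (mul' k H)).rTensor (A ⊗[k] W)
        ∘ₗ mid4 k (H ⊗[k] H) A H W ∘ₗ (ascs k H H A).rTensor (H ⊗[k] W) := by
    ext; rfl
  unfold IsColinL at hφ
  rw [hφ] at hact
  rw [cocommBase_eq ρW hA, ← map_comp_rTensor]
  simp only [actCoactFst, coactFst, diagL, lTensor_comp, LinearMap.ext_iff, comp_apply]
    at hact hasc hmul ⊢
  intro x
  rw [hact, ← hasc, hmul]

theorem lTensor_actCoactFst_comp_diagL (hA : IsCoassocL k ρA) (φ : A ⊗[k] W →ₗ[k] M) :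
    (actCoactFst ρA act φ ∘ₗ cmm k W A).lTensor H ∘ₗ diagL k (mul' k H) ρW ρA
      = actSnd act φ ∘ₗ (muL k (mul' k H)).rTensor (A ⊗[k] W) ∘ₗ cocommBase ρA ρW
        ∘ₗ cmm k W A := by
  have hsplit : (actCoactFst ρA act φ ∘ₗ cmm k W A).lTensor H
        ∘ₗ (mul' k H).rTensor (W ⊗[k] A) ∘ₗ mid4 k H W H A
      = (act ∘ₗ cmm k H M ∘ₗ φ.lTensor H ∘ₗ asc k H A W ∘ₗ cmm k W (H ⊗[k] A)).lTensor H
        ∘ₗ (mul' k H).rTensor (W ⊗[k] (H ⊗[k] A)) ∘ₗ mid4 k H W H (H ⊗[k] A)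
        ∘ₗ (ρA.lTensor H).lTensor (H ⊗[k] W) := by
    ext; rfl
  have hmul : (act ∘ₗ cmm k H M ∘ₗ φ.lTensor H ∘ₗ asc k H A W ∘ₗ cmm k W (H ⊗[k] A)).lTensor H
        ∘ₗ (mul' k H).rTensor (W ⊗[k] (H ⊗[k] A)) ∘ₗ mid4 k H W H (H ⊗[k] A)
      = actSnd act φ ∘ₗ (muL k (mul' k H)).rTensor (A ⊗[k] W)
        ∘ₗ mid4 k (H ⊗[k] H) A H W ∘ₗ (ascs k H H A).rTensor (H ⊗[k] W)
        ∘ₗ cmm k (H ⊗[k] W) (H ⊗[k] (H ⊗[k] A)) := by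
    ext; rfl
  rw [cocommBase_eq ρW hA, comp_assoc _ (map (ρA.lTensor H ∘ₗ ρA) ρW), map_comp_comm_eq,
    ← lTensor_comp_map]
  exact congrArg (· ∘ₗ map ρW ρA)
    (hsplit.trans (congrArg (· ∘ₗ (ρA.lTensor H).lTensor (H ⊗[k] W)) hmul))

theorem isColinL_actCoactFst_comp_comm (hA : IsCoassocL k ρA)
    (hcocomm : CocommCondL k (mul' k H) (Coalgebra.comul (R := k)) ρA ρW)
    {φ : A ⊗[k] W →ₗ[k] M} (hφ : IsColinL k (diagL k (mul' k H) ρA ρW) (trivL k H M) φ) :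
    IsColinL k (diagL k (mul' k H) ρW ρA) (trivL k H M) (actCoactFst ρA act φ ∘ₗ cmm k W A) := by
  have hcocomm' : (muL k (mul' k H)).rTensor (A ⊗[k] W) ∘ₗ cocommBase ρA ρW
      = (muR k (mul' k H)).rTensor (A ⊗[k] W) ∘ₗ cocommBase ρA ρW := hcocomm
  unfold IsColinL
  rw [lTensor_actCoactFst_comp_diagL ρW act hA, ← comp_assoc, trivL_comp_actCoactFst ρW act hA hφ,
    ← hcocomm']
  rfl

end CyclicColinear

section Rotation
variable {k} {H : Type} [Ring H] [HopfAlgebra k H]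
variable {A M : Type} [AddCommGroup A] [Module k A] [AddCommGroup M] [Module k M]
variable (ρA : A →ₗ[k] H ⊗[k] A)

theorem rotρL_eq_coactFst_comp_rot (n : ℕ) : rotρL k ρA n = coactFst ρA (Tpow k A n) ∘ₗ rot k n :=
  congrArg (fun f ↦ asc k H A (Tpow k A n) ∘ₗ f ∘ₗ (epow k A n).toLinearMap)
    (rTensor_comp_comm ρA).symm

theorem tauL_eq_actCoactFst_comp_rot (act : M ⊗[k] H →ₗ[k] M) (n : ℕ)
    (φ : (Tpow k A (n + 1) : Type) →ₗ[k] M) :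
    tauL k ρA act n φ = actCoactFst ρA act φ ∘ₗ rot k n := by
  rw [tauL, rotρL_eq_coactFst_comp_rot]; rfl

/-- `h ⊗ (g ⊗ x) ↦ g h ⊗ x` -/
def mulCoeffs (X : Type) [AddCommGroup X] [Module k X] : H ⊗[k] (H ⊗[k] X) →ₗ[k] H ⊗[k] X :=
  (opMul k H (mul' k H)).rTensor X ∘ₗ ascs k H H X

def rotρLIter : ℕ → (n : ℕ) → (Tpow k A (n + 1) : Type) →ₗ[k] H ⊗[k] (Tpow k A (n + 1) : Type)
  | 0, _ => TensorProduct.mk k H _ 1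
  | m + 1, n => mulCoeffs _ ∘ₗ (rotρL k ρA n).lTensor H ∘ₗ rotρLIter m n

theorem tauL_iterate {act : M ⊗[k] H →ₗ[k] M} (hact : IsRAct k act) (n m : ℕ)
    (φ : (Tpow k A (n + 1) : Type) →ₗ[k] M) :
    (tauL k ρA act n)^[m] φ = act ∘ₗ cmm k H M ∘ₗ φ.lTensor H ∘ₗ rotρLIter ρA m n := by
  induction m generalizing φ with
  | zero => exact LinearMap.ext fun x ↦ (hact.1 (φ x)).symm
  | succ m ih =>
    have hassoc : act ∘ₗ cmm k H M ∘ₗ (act ∘ₗ cmm k H M ∘ₗ φ.lTensor H).lTensor H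
        = act ∘ₗ cmm k H M ∘ₗ φ.lTensor H ∘ₗ mulCoeffs _ :=
      TensorProduct.ext_threefold' fun h g x ↦ hact.2 (φ x) g h
    have hsplit : (tauL k ρA act n φ).lTensor H
        = (act ∘ₗ cmm k H M ∘ₗ φ.lTensor H).lTensor H ∘ₗ (rotρL k ρA n).lTensor H :=
      lTensor_comp H (act ∘ₗ cmm k H M ∘ₗ φ.lTensor H) (rotρL k ρA n)
    rw [Function.iterate_succ_apply, ih, hsplit]
    exact congrArg (· ∘ₗ (rotρL k ρA n).lTensor H ∘ₗ rotρLIter ρA m n) hassoc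

theorem rot_succ (n : ℕ) :
    rot k (R := A) (n + 1) = lcm k A A (Tpow k A n) ∘ₗ (rot k n).lTensor A := by
  have h : cmm k (A ⊗[k] Tpow k A n) A ∘ₗ ascs k A (Tpow k A n) A
      = lcm k A A (Tpow k A n) ∘ₗ (cmm k (Tpow k A n) A).lTensor A := by
    ext; rfl
  exact (congrArg (· ∘ₗ (epow k A n).toLinearMap.lTensor A) h).trans
    (by rw [comp_assoc, ← lTensor_comp]; rfl)

/-- Moves the first tensor factor of `A ⊗ A^{⊗n}` to position `m` (the identity if `m > n`). -/
def shiftFst : (m n : ℕ) → A ⊗[k] Tpow k A n →ₗ[k] A ⊗[k] Tpow k A n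
  | 0, _ => LinearMap.id
  | _ + 1, 0 => LinearMap.id
  | m + 1, n + 1 => (shiftFst m n).lTensor A ∘ₗ lcm k A A (Tpow k A n)

theorem rot_comp_shiftFst {m n : ℕ} (hmn : m ≤ n) :
    rot k (n + 1) ∘ₗ shiftFst m (n + 1) = shiftFst (m + 1) (n + 1) ∘ₗ (rot k n).lTensor A := by
  induction m generalizing n with
  | zero => rw [rot_succ]; simp only [shiftFst, lTensor_id]; rfl
  | succ m ih =>
    obtain ⟨n, rfl⟩ : ∃ n', n = n' + 1 := ⟨n - 1, by omega⟩
    have hswap : lcm k A A (A ⊗[k] Tpow k A n) ∘ₗ ((shiftFst m n).lTensor A).lTensor A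
          ∘ₗ (lcm k A A (Tpow k A n)).lTensor A ∘ₗ lcm k A A (A ⊗[k] Tpow k A n)
        = ((shiftFst m n).lTensor A).lTensor A ∘ₗ (lcm k A A (Tpow k A n)).lTensor A
          ∘ₗ lcm k A A (A ⊗[k] Tpow k A n) ∘ₗ (lcm k A A (Tpow k A n)).lTensor A := by
      ext; rfl
    have hnat : ((rot k n).lTensor A).lTensor A ∘ₗ lcm k A A (A ⊗[k] Tpow k A n)
        = lcm k A A (A ⊗[k] Tpow k A n) ∘ₗ ((rot k n).lTensor A).lTensor A := by
      ext; rfl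
    have ih' := congrArg (LinearMap.lTensor A) (ih (by omega : m ≤ n))
    simp only [shiftFst, rot_succ, lTensor_comp, LinearMap.ext_iff, comp_apply] at ih' hswap hnat ⊢
    intro x
    rw [ih', hnat, hswap]

theorem rot_comp_shiftFst_self (n : ℕ) : rot k (R := A) n ∘ₗ shiftFst n n = LinearMap.id := by
  induction n with
  | zero => ext; rfl
  | succ n ih =>
    have ih' := congrArg (LinearMap.lTensor A) ih
    have hlcm := lcm_comp_lcm k A A (Tpow k A n)
    simp only [lTensor_comp, lTensor_id, LinearMap.ext_iff, comp_apply, id_apply] at ih' hlcm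
    simp only [shiftFst, rot_succ, LinearMap.ext_iff, comp_apply, id_apply]
    intro x
    rw [ih', hlcm]

theorem coactFst_comp_lTensor {X Y : Type} [AddCommGroup X] [Module k X] [AddCommGroup Y]
    [Module k Y] (f : X →ₗ[k] Y) :
    coactFst ρA Y ∘ₗ f.lTensor A = (f.lTensor A).lTensor H ∘ₗ coactFst ρA X := by
  have hasc : asc k H A Y ∘ₗ f.lTensor (H ⊗[k] A) = (f.lTensor A).lTensor H ∘ₗ asc k H A X := by
    ext; rfl
  rw [coactFst, coactFst, comp_assoc, rTensor_comp_lTensor, ← lTensor_comp_rTensor, ← comp_assoc,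
    hasc, comp_assoc]

theorem coactFst_comp_lcm (X : Type) [AddCommGroup X] [Module k X] :
    coactFst ρA (A ⊗[k] X) ∘ₗ lcm k A A X
      = (lcm k A A X).lTensor H ∘ₗ lcm k A H (A ⊗[k] X) ∘ₗ (coactFst ρA X).lTensor A := by
  have h : asc k H A (A ⊗[k] X) ∘ₗ lcm k A (H ⊗[k] A) X
      = (lcm k A A X).lTensor H ∘ₗ lcm k A H (A ⊗[k] X) ∘ₗ (asc k H A X).lTensor A := by
    ext; rfl
  calc coactFst ρA (A ⊗[k] X) ∘ₗ lcm k A A X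
      = (asc k H A (A ⊗[k] X) ∘ₗ lcm k A (H ⊗[k] A) X) ∘ₗ (ρA.rTensor X).lTensor A := by
        ext; rfl
    _ = _ := by rw [h, coactFst, lTensor_comp]; rfl

theorem coactFst_comp_shiftFst_succ (m n : ℕ) :
    coactFst ρA (Tpow k A (n + 1)) ∘ₗ shiftFst (m + 1) (n + 1)
      = (shiftFst (m + 1) (n + 1)).lTensor H ∘ₗ lcm k A H (Tpow k A (n + 1))
        ∘ₗ (coactFst ρA (Tpow k A n)).lTensor A := by
  have h₁ := coactFst_comp_lTensor ρA (shiftFst (k := k) (A := A) m n)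
  have h₂ := coactFst_comp_lcm ρA (Tpow k A n)
  simp only [shiftFst, lTensor_comp, LinearMap.ext_iff, comp_apply] at h₁ h₂ ⊢
  intro x
  rw [h₁, h₂]

theorem rotρL_comp_shiftFst {m n : ℕ} (hmn : m ≤ n) :
    rotρL k ρA (n + 1) ∘ₗ shiftFst m (n + 1)
      = (shiftFst (m + 1) (n + 1)).lTensor H ∘ₗ lcm k A H (Tpow k A (n + 1))
        ∘ₗ (rotρL k ρA n).lTensor A := by
  rw [rotρL_eq_coactFst_comp_rot, rotρL_eq_coactFst_comp_rot, comp_assoc, rot_comp_shiftFst hmn,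
    ← comp_assoc, coactFst_comp_shiftFst_succ, lTensor_comp]
  rfl

theorem rotρL_comp_shiftFst_self (n : ℕ) :
    rotρL k ρA n ∘ₗ shiftFst n n = coactFst ρA (Tpow k A n) := by
  rw [rotρL_eq_coactFst_comp_rot, comp_assoc, rot_comp_shiftFst_self, comp_id]

theorem rotρLIter_tpow_succ {m n : ℕ} (hmn : m ≤ n + 1) :
    rotρLIter ρA m (n + 1) = (shiftFst m (n + 1)).lTensor H ∘ₗ lcm k A H (Tpow k A (n + 1))
      ∘ₗ (rotρLIter ρA m n).lTensor A := by
  induction m with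
  | zero => ext; rfl
  | succ m ih =>
    have hrot := congrArg (LinearMap.lTensor H) (rotρL_comp_shiftFst ρA (by omega : m ≤ n))
    have hnat : ((rotρL k ρA n).lTensor A).lTensor H ∘ₗ lcm k A H (Tpow k A (n + 1))
        = lcm k A H (H ⊗[k] Tpow k A (n + 1)) ∘ₗ ((rotρL k ρA n).lTensor H).lTensor A := by
      ext; rfl
    have hmul : mulCoeffs (Tpow k A (n + 2)) ∘ₗ ((shiftFst (m + 1) (n + 1)).lTensor H).lTensor H
          ∘ₗ (lcm k A H (Tpow k A (n + 1))).lTensor H ∘ₗ lcm k A H (H ⊗[k] Tpow k A (n + 1))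
        = (shiftFst (m + 1) (n + 1)).lTensor H ∘ₗ lcm k A H (Tpow k A (n + 1))
          ∘ₗ (mulCoeffs (Tpow k A (n + 1))).lTensor A := by
      ext; rfl
    rw [rotρLIter, rotρLIter, ih (by omega)]
    simp only [lTensor_comp, LinearMap.ext_iff, comp_apply] at hrot hnat hmul ⊢
    intro x
    rw [hrot, hnat, hmul]

theorem mulCoeffs_comp_coactFst {Y : Type} [AddCommGroup Y] [Module k Y] (ρY : Y →ₗ[k] H ⊗[k] Y) :
    mulCoeffs (A ⊗[k] Y) ∘ₗ (coactFst ρA Y).lTensor H ∘ₗ lcm k A H Y ∘ₗ ρY.lTensor A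
      = diagL k (mul' k H) ρA ρY := by
  have hnat : mulCoeffs (A ⊗[k] Y) ∘ₗ (coactFst ρA Y).lTensor H ∘ₗ lcm k A H Y
      = mulCoeffs (A ⊗[k] Y) ∘ₗ (asc k H A Y).lTensor H ∘ₗ lcm k (H ⊗[k] A) H Y
        ∘ₗ ρA.rTensor (H ⊗[k] Y) := by
    ext; rfl
  have hmul : mulCoeffs (A ⊗[k] Y) ∘ₗ (asc k H A Y).lTensor H ∘ₗ lcm k (H ⊗[k] A) H Y
      = (mul' k H).rTensor (A ⊗[k] Y) ∘ₗ mid4 k H A H Y := by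
    ext; rfl
  rw [diagL, ← rTensor_comp_lTensor]
  simp only [LinearMap.ext_iff, comp_apply] at hnat hmul ⊢
  intro x
  rw [hnat, hmul]

theorem rotρL_zero : rotρL k ρA 0 = diagL k (mul' k H) ρA (trivL k H k) := by
  have hunit : asc k H A k = (mul' k H).rTensor (A ⊗[k] k) ∘ₗ mid4 k H A H k
      ∘ₗ (trivL k H k).lTensor (H ⊗[k] A) := by
    ext; simp [trivL]
  have h := rotρL_comp_shiftFst_self ρA 0
  rw [shiftFst, comp_id] at h
  rw [h, coactFst, hunit, comp_assoc, comp_assoc, lTensor_comp_rTensor]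
  rfl

theorem mulCoeffs_comp_mk_one {X Y : Type} [AddCommGroup X] [Module k X] [AddCommGroup Y]
    [Module k Y] (f : X →ₗ[k] H ⊗[k] Y) :
    mulCoeffs Y ∘ₗ f.lTensor H ∘ₗ TensorProduct.mk k H X 1 = f := by
  have h : mulCoeffs Y ∘ₗ TensorProduct.mk k H (H ⊗[k] Y) 1 = LinearMap.id := by
    ext; simp [mulCoeffs, opMul]
  exact congrArg (· ∘ₗ f) h

theorem rotρLIter_self (n : ℕ) : rotρLIter ρA (n + 1) n = TpowρL k (mul' k H) ρA (n + 1) := by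
  induction n with
  | zero => exact (mulCoeffs_comp_mk_one _).trans (rotρL_zero ρA)
  | succ n ih =>
    have hself := congrArg (LinearMap.lTensor H) (rotρL_comp_shiftFst_self ρA (n + 1))
    rw [rotρLIter, rotρLIter_tpow_succ ρA le_rfl, ih]
    simp only [lTensor_comp, LinearMap.ext_iff, comp_apply] at hself ⊢
    intro x
    rw [hself]
    exact LinearMap.congr_fun (mulCoeffs_comp_coactFst ρA _) x

end Rotation

/-- If `H` coacts cocommutatively on the left `H`-comodule algebra `A`,
then any right `H`-module `M` with the trivial left coaction `m ↦ 1 ⊗ m` is an `^A H`-HCC: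
the cyclic operator preserves `H`-colinearity and the operators make
`Hom^H(A^{⊗(n+1)}, M)` a cocyclic module. -/
theorem stmt6 (k H A M : Type) [Field k] [Ring H] [HopfAlgebra k H] [Ring A] [Algebra k A]
    [AddCommGroup M] [Module k M]
    (ρA : A →ₗ[k] H ⊗[k] A) (hA : IsComodAlgL k ρA)
    (act : M ⊗[k] H →ₗ[k] M) (hact : IsRAct k act)
    (hcocomm : ∀ n : ℕ,
      CocommCondL k (LinearMap.mul' k H) (Coalgebra.comul (R := k)) ρA
        (TpowρL k (LinearMap.mul' k H) ρA n)) :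
    IsAHHCCL k ρA (trivL k H M) act := by
  intro n φ hφ
  constructor
  · rw [tauL_eq_actCoactFst_comp_rot]
    exact (isColinL_actCoactFst_comp_comm _ act hA.1 (hcocomm n) hφ).comp (isColinL_epow ρA n)
  · have hφ' : trivL k H M ∘ₗ φ = φ.lTensor H ∘ₗ TpowρL k (mul' k H) ρA (n + 1) := hφ
    rw [tauL_iterate ρA hact, rotρLIter_self, ← hφ']
    exact LinearMap.ext fun x ↦ hact.1 (φ x)

end HCN
end
end

section
/- Let H = F ⋈ U be a bicrossed product Hopf algebra of a matched pair (F, U) where F is cocommutative, with F a right H-comodule algebra via f ↦ f⁽¹⁾ ⊗ (f⁽²⁾ ⋈ 1_U). Then any right H-module M endowed with the trivial H-coaction is a ^F H-SAYD module. -/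
open TensorProduct LinearMap

noncomputable section
namespace HCN

variable (k : Type) [Field k]

/-!
On the image of `F` in `F ⋈ U` (the elements `f ⋈ 1`) the product, coproduct and antipode of
the bicrossed product are those of `F`, so the anti-Yetter–Drinfeld twist of `(m ⊗ 1) ⊗ (f ⋈ 1)`
is `m · f⁽²⁾ ⊗ S(f⁽³⁾) f⁽¹⁾`. Since `F` is cocommutative, `f⁽¹⁾ ⊗ f⁽²⁾ ⊗ f⁽³⁾` is invariant under
cyclic rotation, so this is `m · f⁽¹⁾ ⊗ S(f⁽³⁾) f⁽²⁾ = m · f ⊗ 1`, the trivial coaction of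
`m · (f ⋈ 1)`. Stability follows from colinearity with respect to the trivial coaction and
unitality of the action.
-/

section Cocommutative
variable (R A : Type) [CommRing R] [Ring A] [HopfAlgebra R A]

/-- The part `S(h⁽³⁾) h⁽¹⁾ ⊗ h⁽²⁾` of the twist `Twist` at `g = 1`, before acting on the module. -/
def twistCore : A ⊗[R] (A ⊗[R] A) →ₗ[R] A ⊗[R] A :=
  (TensorProduct.comm R A A).toLinearMap
    ∘ₗ (LinearMap.mul' R A ∘ₗ (HopfAlgebra.antipode R).rTensor A).lTensor A
    ∘ₗ (TensorProduct.assoc R A A A).toLinearMap ∘ₗ (TensorProduct.comm R A (A ⊗[R] A)).toLinearMap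

variable {R A}

@[simp] lemma twistCore_tmul (x y z : A) :
    twistCore R A (x ⊗ₜ (y ⊗ₜ z)) = (HopfAlgebra.antipode R z * x) ⊗ₜ y := rfl

lemma comul_lTensor_comul_rotate [Coalgebra.IsCocomm R A] (a : A) :
    TensorProduct.assoc R A A A (TensorProduct.comm R A (A ⊗[R] A)
      ((Coalgebra.comul (R := R)).lTensor A (Coalgebra.comul a)))
      = (Coalgebra.comul (R := R)).lTensor A (Coalgebra.comul a) := by
  rw [← LinearMap.rTensor_comm, Coalgebra.comm_comul, Coalgebra.coassoc_apply]

lemma twistCore_comul_lTensor_comul [Coalgebra.IsCocomm R A] (a : A) :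
    twistCore R A ((Coalgebra.comul (R := R)).lTensor A (Coalgebra.comul a)) = 1 ⊗ₜ a := by
  simp only [twistCore, LinearMap.comp_apply, LinearEquiv.coe_coe]
  rw [comul_lTensor_comul_rotate, ← LinearMap.comp_apply (LinearMap.lTensor A _),
    ← LinearMap.lTensor_comp, LinearMap.comp_assoc, HopfAlgebra.mul_antipode_rTensor_comul,
    LinearMap.lTensor_comp, LinearMap.comp_apply, Coalgebra.lTensor_counit_comul]
  simp

end Cocommutative

section TwistOnImage
variable {k : Type} [Field k] {F H M : Type} [Ring F] [HopfAlgebra k F]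
  [AddCommGroup H] [Module k H] [AddCommGroup M] [Module k M]
  {μ : H ⊗[k] H →ₗ[k] H} {Δ : H →ₗ[k] H ⊗[k] H} {S : H →ₗ[k] H} {j : F →ₗ[k] H}

lemma lTensor_apply_apply_of_comp_eq_map
    (hΔ : Δ ∘ₗ j = TensorProduct.map j j ∘ₗ Coalgebra.comul) (f : F) :
    Δ.lTensor H (Δ (j f))
      = TensorProduct.map j (TensorProduct.map j j)
          ((Coalgebra.comul (R := k)).lTensor F (Coalgebra.comul f)) := by
  rw [← LinearMap.comp_apply Δ j, hΔ, LinearMap.comp_apply, LinearMap.lTensor_map, hΔ,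
    ← LinearMap.map_comp_lTensor, LinearMap.comp_apply]

lemma twist_image_eq_map_twistCore (hμ : ∀ x y, μ (j x ⊗ₜ j y) = j (x * y))
    (hΔ : Δ ∘ₗ j = TensorProduct.map j j ∘ₗ Coalgebra.comul)
    (hS : ∀ x, S (j x) = j (HopfAlgebra.antipode k x)) (act : M ⊗[k] H →ₗ[k] M) (m : M) (f : F) :
    Twist k μ Δ S act (j f ⊗ₜ (j 1 ⊗ₜ m))
      = TensorProduct.map j (act ∘ₗ TensorProduct.mk k M H m ∘ₗ j)
          (twistCore k F ((Coalgebra.comul (R := k)).lTensor F (Coalgebra.comul f))) := by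
  simp only [Twist, LinearMap.comp_apply, LinearMap.rTensor_tmul]
  rw [lTensor_apply_apply_of_comp_eq_map hΔ]
  generalize (Coalgebra.comul (R := k)).lTensor F (Coalgebra.comul f) = t
  induction t using TensorProduct.induction_on with
  | zero => simp
  | add a b ha hb => simp only [map_add, TensorProduct.add_tmul, ha, hb]
  | tmul x t =>
    induction t using TensorProduct.induction_on with
    | zero => simp
    | add a b ha hb => simp only [map_add, TensorProduct.add_tmul, TensorProduct.tmul_add, ha, hb]
    | tmul y z => simp [opMul, hμ, hS]

lemma twist_image_of_isCocomm [Coalgebra.IsCocomm k F]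
    (hμ : ∀ x y, μ (j x ⊗ₜ j y) = j (x * y))
    (hΔ : Δ ∘ₗ j = TensorProduct.map j j ∘ₗ Coalgebra.comul)
    (hS : ∀ x, S (j x) = j (HopfAlgebra.antipode k x)) (act : M ⊗[k] H →ₗ[k] M) (m : M) (f : F) :
    Twist k μ Δ S act (j f ⊗ₜ (j 1 ⊗ₜ m)) = j 1 ⊗ₜ act (m ⊗ₜ j f) := by
  rw [twist_image_eq_map_twistCore hμ hΔ hS, twistCore_comul_lTensor_comul]
  rfl

lemma twistR_image_of_isCocomm [Coalgebra.IsCocomm k F]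
    (hμ : ∀ x y, μ (j x ⊗ₜ j y) = j (x * y))
    (hΔ : Δ ∘ₗ j = TensorProduct.map j j ∘ₗ Coalgebra.comul)
    (hS : ∀ x, S (j x) = j (HopfAlgebra.antipode k x)) (act : M ⊗[k] H →ₗ[k] M) (m : M) (f : F) :
    TwistR k μ Δ S act ((m ⊗ₜ j 1) ⊗ₜ j f) = act (m ⊗ₜ j f) ⊗ₜ j 1 := by
  simp [TwistR, twist_image_of_isCocomm hμ hΔ hS]

end TwistOnImage

section TrivialCoaction
variable {k : Type} [Field k] {H A M : Type} [Ring H] [Algebra k H]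
  [AddCommGroup A] [Module k A] [AddCommGroup M] [Module k M]

lemma coactFirstR_lTensor_comp {B W : Type} [Ring B] [Algebra k B] [AddCommGroup W] [Module k W]
    (j : B →ₗ[k] H) (ρ : A →ₗ[k] A ⊗[k] B) :
    coactFirstR k (W := W) (j.lTensor A ∘ₗ ρ) = j.lTensor (A ⊗[k] W) ∘ₗ coactFirstR k ρ := by
  refine TensorProduct.ext' fun a w => ?_
  simp only [coactFirstR, LinearMap.comp_apply, LinearMap.rTensor_tmul]
  induction ρ a using TensorProduct.induction_on with
  | zero => simp
  | add x y hx hy => simp only [map_add, TensorProduct.add_tmul, hx, hy]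
  | tmul b h => simp

lemma aydCondR_of_twistR_eq {B W : Type} [Ring B] [Algebra k B] [AddCommGroup W] [Module k W]
    {μ : H ⊗[k] H →ₗ[k] H} {Δ : H →ₗ[k] H ⊗[k] H} {S : H →ₗ[k] H}
    {ρM : M →ₗ[k] M ⊗[k] H} {act : M ⊗[k] H →ₗ[k] M} (j : B →ₗ[k] H) (ρ : A →ₗ[k] A ⊗[k] B)
    (hTw : ∀ m b, TwistR k μ Δ S act (ρM m ⊗ₜ j b) = ρM (act (m ⊗ₜ j b)))
    (φ : A ⊗[k] W →ₗ[k] M) :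
    AYDcondR k μ Δ S (j.lTensor A ∘ₗ ρ) ρM act φ := by
  refine LinearMap.ext fun x => ?_
  simp only [coactFirstR_lTensor_comp, LinearMap.comp_apply]
  induction coactFirstR k ρ x using TensorProduct.induction_on with
  | zero => simp
  | add x y hx hy => simp only [map_add, hx, hy]
  | tmul v b => simp [hTw]

lemma stabCondR_of_isColinR_trivR {V : Type} [AddCommGroup V] [Module k V]
    {ρV : V →ₗ[k] V ⊗[k] H} {act : M ⊗[k] H →ₗ[k] M} {φ : V →ₗ[k] M}
    (hact : ∀ m, act (m ⊗ₜ 1) = m) (hφ : IsColinR k ρV (trivR k H M) φ) :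
    StabCondR k ρV act φ := by
  rw [IsColinR] at hφ
  rw [StabCondR, ← hφ]
  exact LinearMap.ext fun v => hact (φ v)

end TrivialCoaction

section Bicross
variable {k F U : Type} [Field k] [Ring F] [HopfAlgebra k F] [Ring U] [HopfAlgebra k U]
  {α : U ⊗[k] F →ₗ[k] F} {ρU : U →ₗ[k] U ⊗[k] F}

lemma jF_apply (f : F) : jF k F U f = f ⊗ₜ 1 := rfl

lemma one_eq_jF_one : (1 : F ⊗[k] U) = jF k F U 1 := Algebra.TensorProduct.one_def

lemma bmul_jF_jF (hα1 : ∀ f : F, α (1 ⊗ₜ f) = f) (x y : F) :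
    bmul k α (jF k F U x ⊗ₜ jF k F U y) = jF k F U (x * y) := by
  simp [bmul, jF_apply, Algebra.TensorProduct.one_def, hα1]

lemma bcomul_comp_jF (hρU1 : ρU 1 = 1 ⊗ₜ 1) :
    bcomul k ρU ∘ₗ jF k F U = TensorProduct.map (jF k F U) (jF k F U) ∘ₗ Coalgebra.comul := by
  refine LinearMap.ext fun f => ?_
  simp only [bcomul, LinearMap.comp_apply, jF_apply, TensorProduct.map_tmul,
    Bialgebra.comul_one, Algebra.TensorProduct.one_def]
  induction Coalgebra.comul (R := k) f using TensorProduct.induction_on with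
  | zero => simp
  | add a b ha hb => simp only [TensorProduct.add_tmul, map_add, ha, hb]
  | tmul x y => simp [hρU1, opMul, jF_apply]

lemma bS_jF (hα1 : ∀ f : F, α (1 ⊗ₜ f) = f) (hρU1 : ρU 1 = 1 ⊗ₜ 1) (f : F) :
    bS k α ρU (jF k F U f) = jF k F U (HopfAlgebra.antipode k f) := by
  simpa [bS, jF_apply, hρU1, opMul, jU] using bmul_jF_jF hα1 1 (HopfAlgebra.antipode k f)

end Bicross

/-- Let `H = F ⋈ U` be a bicrossed product Hopf algebra of a matched pair
`(F, U)` with `F` cocommutative, and regard `F` as a right `H`-comodule algebra via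
`f ↦ f⁽¹⁾ ⊗ (f⁽²⁾ ⋈ 1)`. Then any right `H`-module `M` with the trivial coaction is a
`^F H`-SAYD module. -/
theorem stmt8 (k F U M : Type) [Field k] [Ring F] [HopfAlgebra k F] [Ring U] [HopfAlgebra k U]
    [AddCommGroup M] [Module k M]
    (α : U ⊗[k] F →ₗ[k] F) (ρU : U →ₗ[k] U ⊗[k] F)
    (hmp : IsMatchedPair k α ρU)
    (hFcocomm : cmm k F F ∘ₗ (Coalgebra.comul (R := k) (A := F))
      = Coalgebra.comul (R := k) (A := F))
    (act : M ⊗[k] (F ⊗[k] U) →ₗ[k] M)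
    (hact : IsRActμ k (bmul k α) (1 : F ⊗[k] U) act) :
    IsAHSAYDR k (bmul k α) (bcomul k ρU) (bS k α ρU)
      (bcoactF k F U) (trivR k (F ⊗[k] U) M) act := by
  obtain ⟨hα1, -, -, -, -, -, -, -, hρU1, -⟩ := hmp
  have : Coalgebra.IsCocomm k F := ⟨hFcocomm⟩
  intro n φ hφ
  refine ⟨aydCondR_of_twistR_eq (jF k F U) Coalgebra.comul (fun m f => ?_) φ,
    stabCondR_of_isColinR_trivR hact.1 hφ⟩
  simpa only [trivR, LinearMap.flip_apply, TensorProduct.mk_apply, one_eq_jF_one] using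
    twistR_image_of_isCocomm (bmul_jF_jF hα1) (bcomul_comp_jF hρU1) (bS_jF hα1 hρU1) act m f

end HCN
end
end
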